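/- arXiv:2504.10234 — 6 statements merged into one kernel-verified Lean document; each statement's English description precedes it below -/
import Mathlib

section
/- For every rational number λ with 0 < λ < 1 there exists an NFA A_λ over a unary alphabet {a} such that A_λ is λ-memoryless-stochastically-resolvable, but for every ε > 0 the automaton A_λ is not (λ + ε)-memoryless-stochastically-resolvable. -/
open scoped BigOperators

/-- A nondeterministic finite automaton over alphabet `σ` with states `Q`:
an initial state, a finite set of transitions and a finite set of accepting states. -/
structure NFA' (σ Q : Type) where
  init : Q
  trans : Finset (Q × σ × Q)
  accept : Finset Q

namespace NFA'

variable {σ Q : Type}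

/-- `IsRun Δ p w ts r`: `ts` is a run on the word `w` from state `p` to state `r`,
using transitions from `Δ`. -/
inductive IsRun (Δ : Finset (Q × σ × Q)) : Q → List σ → List (Q × σ × Q) → Q → Prop
  | nil (q : Q) : IsRun Δ q [] [] q
  | cons {p : Q} {a : σ} {q r : Q} {w : List σ} {ts : List (Q × σ × Q)} :
      (p, a, q) ∈ Δ → IsRun Δ q w ts r → IsRun Δ p (a :: w) ((p, a, q) :: ts) r

/-- `ts` is an accepting run of `A` on `w`. -/
def AccRun (A : NFA' σ Q) (w : List σ) (ts : List (Q × σ × Q)) : Prop :=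
  ∃ r ∈ A.accept, IsRun A.trans A.init w ts r

/-- The language of `A`: words admitting an accepting run. -/
def lang (A : NFA' σ Q) : Set (List σ) := {w | ∃ ts, A.AccRun w ts}

/-- `δ(q, u)`: the set of states reachable from `q` by a run on `u`. -/
def reach (A : NFA' σ Q) (q : Q) (u : List σ) : Set Q :=
  {r | ∃ ts, IsRun A.trans q u ts r}

/-- The word `u` admits an accepting run from the state `q`. -/
def AccFrom (A : NFA' σ Q) (q : Q) (u : List σ) : Prop :=
  ∃ r ∈ A.accept, ∃ ts, IsRun A.trans q u ts r

/-- `A_S`: the automaton `A` with transitions restricted to `S`. -/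
def restrict (A : NFA' σ Q) (S : Finset (Q × σ × Q)) : NFA' σ Q :=
  { A with trans := S }

/-- `A` is `k`-ambiguous: every word has at most `k` accepting runs. -/
def kAmbiguous (A : NFA' σ Q) (k : ℕ) : Prop :=
  ∀ w, {ts | A.AccRun w ts}.encard ≤ (k : ℕ∞)

/-- `A` is finitely-ambiguous. -/
def FinitelyAmbiguous (A : NFA' σ Q) : Prop := ∃ k : ℕ, 0 < k ∧ A.kAmbiguous k

/-- A memoryless stochastic resolver for `A`: probabilities, supported on the transitions
of `A`, summing to one over the outgoing transitions of every pair `(p, a)` that has at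
least one outgoing transition (implicitly, `A` is completed with a non-accepting sink). -/
structure Resolver (A : NFA' σ Q) where
  r : Q × σ × Q → ℝ
  nonneg : ∀ t, 0 ≤ r t
  le_one : ∀ t, r t ≤ 1
  supp : ∀ t, r t ≠ 0 → t ∈ A.trans
  sum_one : ∀ p a, (∃ q, (p, a, q) ∈ A.trans) →
      ∑ t ∈ A.trans, {t : Q × σ × Q | t.1 = p ∧ t.2.1 = a}.indicator r t = 1

/-- The probability of a run: the product of the probabilities of its transitions. -/
def runProb (f : Q × σ × Q → ℝ) (ts : List (Q × σ × Q)) : ℝ := (ts.map f).prod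

/-- The acceptance probability of a word: the sum, over all accepting runs, of the
product of the transition probabilities along the run. -/
noncomputable def accProb (A : NFA' σ Q) (f : Q × σ × Q → ℝ) (w : List σ) : ℝ :=
  ∑ᶠ ts ∈ {ts | A.AccRun w ts}, runProb f ts

/-- `A` is `λ`-memoryless-stochastically-resolvable. -/
def Resolvable (A : NFA' σ Q) (lam : ℝ) : Prop :=
  ∃ R : A.Resolver, {w | lam ≤ A.accProb R.r w} = A.lang

/-- `A` is positively (memoryless stochastically) resolvable. -/
def PositivelyResolvable (A : NFA' σ Q) : Prop :=
  ∃ lam : ℝ, 0 < lam ∧ A.Resolvable lam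

/-- The support `S` is bad: no resolver whose support is exactly `S` witnesses
positive resolvability. -/
def BadSupport (A : NFA' σ Q) (S : Finset (Q × σ × Q)) : Prop :=
  ∀ R : A.Resolver, (∀ t, R.r t ≠ 0 ↔ t ∈ S) →
    ∀ lam : ℝ, 0 < lam → {w | lam ≤ A.accProb R.r w} ≠ A.lang

/-- A transition is nondeterministic in `S`. -/
def NondetIn (S : Finset (Q × σ × Q)) (t : Q × σ × Q) : Prop :=
  t ∈ S ∧ ∃ q', q' ≠ t.2.2 ∧ (t.1, t.2.1, q') ∈ S

/-- The number of transitions of a run that are nondeterministic in `S`. -/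
noncomputable def nondetCount (S : Finset (Q × σ × Q)) (ts : List (Q × σ × Q)) : ℕ :=
  (ts.map (Set.indicator {t | NondetIn S t} (fun _ => 1))).sum

/-- `b(w)`: the minimal number of `S`-nondeterministic transitions over all accepting
runs of `w` in `A_S`. -/
noncomputable def minNondet (A : NFA' σ Q) (S : Finset (Q × σ × Q)) (w : List σ) : ℕ :=
  sInf {m | ∃ ts, (A.restrict S).AccRun w ts ∧ nondetCount S ts = m}

/-- The state of a run `ts` (started in `q0`) after `n` transitions. -/
def stateAt (q0 : Q) (ts : List (Q × σ × Q)) (n : ℕ) : Q :=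
  match (ts.take n).getLast? with
  | some t => t.2.2
  | none => q0

/-- `Θ` makes `A` into a probabilistic finite automaton (PFA) based on `A`. -/
def IsPFA (A : NFA' σ Q) (Θ : Q × σ × Q → ℝ) : Prop :=
  (∀ t ∈ A.trans, 0 < Θ t ∧ Θ t ≤ 1) ∧ (∀ t, t ∉ A.trans → Θ t = 0) ∧
  ∀ p a, (∃ q, (p, a, q) ∈ A.trans) →
    ∑ t ∈ A.trans, {t : Q × σ × Q | t.1 = p ∧ t.2.1 = a}.indicator Θ t = 1

/-- The PFA is simple: every transition has probability `1/2` or `1`. -/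
def IsSimple (A : NFA' σ Q) (Θ : Q × σ × Q → ℝ) : Prop :=
  ∀ t ∈ A.trans, Θ t = 1/2 ∨ Θ t = 1

end NFA'

open NFA'

/-!
Write `λ = p / q` with `0 < p ≤ q`. The automaton `cycleNFA p q` moves on its first letter
from the initial state into any state `c_z = z.succ` (`z : Fin q`) of a deterministic cycle
`c_z → c_{z+1}` of length `q`, in which `c_0, …, c_{p-1}` accept; so it accepts exactly the
nonempty words. A resolver is determined by the distribution `x` it puts on the `q` entry
transitions, and `a^(i+1)` is accepted with probability the `x`-mass of those `z` with
`z + i < p` (mod `q`). Every entry point leads to acceptance for exactly `p` of the words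
`a, …, a^q`, so their acceptance probabilities sum to `p`. Hence they cannot all reach
`p / q + ε`, while the uniform resolver gives every nonempty word probability exactly `p / q`.
-/

open Finset
open scoped Fin.NatCast Fin.CommRing

namespace NFA'

variable {σ Q : Type}

lemma isRun_nil_iff {Δ : Finset (Q × σ × Q)} {p r : Q} {ts : List (Q × σ × Q)} :
    IsRun Δ p [] ts r ↔ ts = [] ∧ r = p := by
  constructor
  · rintro ⟨⟩
    exact ⟨rfl, rfl⟩
  · rintro ⟨rfl, rfl⟩
    exact .nil _

lemma isRun_cons_iff {Δ : Finset (Q × σ × Q)} {p r : Q} {a : σ} {w : List σ}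
    {ts : List (Q × σ × Q)} :
    IsRun Δ p (a :: w) ts r ↔
      ∃ q, (p, a, q) ∈ Δ ∧ ∃ ts', IsRun Δ q w ts' r ∧ ts = (p, a, q) :: ts' := by
  constructor
  · rintro (_ | ⟨hmem, hrun⟩)
    exact ⟨_, hmem, _, hrun, rfl⟩
  · rintro ⟨q, hmem, ts', hrun, rfl⟩
    exact .cons hmem hrun

variable [DecidableEq σ] [DecidableEq Q]

def outgoing (A : NFA' σ Q) (p : Q) (a : σ) : Finset (Q × σ × Q) :=
  {t ∈ A.trans | t.1 = p ∧ t.2.1 = a}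

variable {A : NFA' σ Q}

lemma sum_indicator_eq_sum_outgoing (f : Q × σ × Q → ℝ) (p : Q) (a : σ) :
    ∑ t ∈ A.trans, {t : Q × σ × Q | t.1 = p ∧ t.2.1 = a}.indicator f t =
      ∑ t ∈ A.outgoing p a, f t := by
  simp only [outgoing, sum_filter, Set.indicator_apply, Set.mem_ofPred_eq]

namespace Resolver

lemma sum_outgoing (R : A.Resolver) {p : Q} {a : σ} (h : ∃ q, (p, a, q) ∈ A.trans) :
    ∑ t ∈ A.outgoing p a, R.r t = 1 := by
  rw [← sum_indicator_eq_sum_outgoing]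
  exact R.sum_one p a h

lemma eq_one_of_outgoing_eq_singleton (R : A.Resolver) {t : Q × σ × Q}
    (h : A.outgoing t.1 t.2.1 = {t}) : R.r t = 1 := by
  have ht : t ∈ A.trans := (mem_filter.1 (h ▸ mem_singleton_self t)).1
  simpa [h] using R.sum_outgoing ⟨t.2.2, ht⟩

variable (A) in
noncomputable def uniform : A.Resolver where
  r t := if t ∈ A.trans then ((A.outgoing t.1 t.2.1).card : ℝ)⁻¹ else 0
  nonneg t := by split_ifs <;> positivity
  le_one t := by
    split_ifs with ht
    · have hmem : t ∈ A.outgoing t.1 t.2.1 := mem_filter.2 ⟨ht, rfl, rfl⟩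
      exact inv_le_one_of_one_le₀ (by exact_mod_cast card_pos.2 ⟨t, hmem⟩)
    · exact zero_le_one
  supp t := by
    contrapose!
    exact fun ht => if_neg ht
  sum_one p a h := by
    obtain ⟨q, hq⟩ := h
    have hne : (A.outgoing p a).card ≠ 0 := card_ne_zero_of_mem (mem_filter.2 ⟨hq, rfl, rfl⟩)
    rw [sum_indicator_eq_sum_outgoing,
      sum_congr rfl (g := fun _ => ((A.outgoing p a).card : ℝ)⁻¹), sum_const, nsmul_eq_mul,
      mul_inv_cancel₀ (by exact_mod_cast hne)]
    intro t ht
    obtain ⟨htr, rfl, rfl⟩ := mem_filter.1 ht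
    exact if_pos htr

lemma uniform_apply {t : Q × σ × Q} (ht : t ∈ A.trans) :
    (uniform A).r t = ((A.outgoing t.1 t.2.1).card : ℝ)⁻¹ :=
  if_pos ht

end Resolver

lemma entry_injective {q : ℕ} :
    Function.Injective fun z : Fin q => ((0 : Fin (q + 1)), (), z.succ) :=
  fun _ _ h => Fin.succ_injective _ (congrArg (fun t => t.2.2) h)

section Cycle

variable {p q : ℕ} [NeZero q]

def cycleNFA (p q : ℕ) [NeZero q] : NFA' Unit (Fin (q + 1)) where
  init := 0
  trans := (univ.image fun z : Fin q => (0, (), z.succ)) ∪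
    (univ.image fun z : Fin q => (z.succ, (), (z + 1).succ))
  accept := ({z | (z : ℕ) < p} : Finset (Fin q)).image Fin.succ

lemma cycleNFA_init : (cycleNFA p q).init = 0 := rfl

lemma zero_mem_trans_cycleNFA {x : Fin (q + 1)} :
    (0, (), x) ∈ (cycleNFA p q).trans ↔ ∃ z : Fin q, x = z.succ := by
  simp [cycleNFA, eq_comm, Fin.succ_ne_zero]

lemma succ_mem_trans_cycleNFA {z : Fin q} {x : Fin (q + 1)} :
    (z.succ, (), x) ∈ (cycleNFA p q).trans ↔ x = (z + 1).succ := by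
  simp [cycleNFA, eq_comm, Fin.succ_ne_zero]

lemma succ_mem_accept_cycleNFA {z : Fin q} :
    z.succ ∈ (cycleNFA p q).accept ↔ (z : ℕ) < p := by
  simp [cycleNFA]

lemma zero_notMem_accept_cycleNFA : (0 : Fin (q + 1)) ∉ (cycleNFA p q).accept := by
  simp [cycleNFA, Fin.succ_ne_zero]

def cycleRun : Fin q → ℕ → List (Fin (q + 1) × Unit × Fin (q + 1))
  | _, 0 => []
  | z, i + 1 => (z.succ, (), (z + 1).succ) :: cycleRun (z + 1) i

lemma isRun_cycleNFA_succ_iff {z : Fin q} {i : ℕ}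
    {ts : List (Fin (q + 1) × Unit × Fin (q + 1))} {r : Fin (q + 1)} :
    IsRun (cycleNFA p q).trans z.succ (List.replicate i ()) ts r ↔
      ts = cycleRun z i ∧ r = (z + (i : Fin q)).succ := by
  induction i generalizing z ts with
  | zero => simp [isRun_nil_iff, cycleRun]
  | succ i ih =>
    have hshift : z + 1 + (i : Fin q) = z + ((i + 1 : ℕ) : Fin q) := by push_cast; ring
    rw [List.replicate_succ, isRun_cons_iff]
    simp only [succ_mem_trans_cycleNFA, exists_eq_left, ih, cycleRun, hshift]
    constructor
    · rintro ⟨ts', ⟨rfl, rfl⟩, rfl⟩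
      exact ⟨rfl, rfl⟩
    · rintro ⟨rfl, rfl⟩
      exact ⟨_, ⟨rfl, rfl⟩, rfl⟩

lemma accRun_cycleNFA_replicate_succ_iff {i : ℕ}
    {ts : List (Fin (q + 1) × Unit × Fin (q + 1))} :
    (cycleNFA p q).AccRun (List.replicate (i + 1) ()) ts ↔
      ∃ z : Fin q, ((z + (i : Fin q) : Fin q) : ℕ) < p ∧
        ts = (0, (), z.succ) :: cycleRun z i := by
  simp only [AccRun, cycleNFA_init, List.replicate_succ, isRun_cons_iff,
    zero_mem_trans_cycleNFA]
  constructor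
  · rintro ⟨r, hr, _, ⟨z, rfl⟩, ts', hrun, rfl⟩
    obtain ⟨rfl, rfl⟩ := isRun_cycleNFA_succ_iff.1 hrun
    exact ⟨z, succ_mem_accept_cycleNFA.1 hr, rfl⟩
  · rintro ⟨z, hz, rfl⟩
    exact ⟨_, succ_mem_accept_cycleNFA.2 hz, _, ⟨z, rfl⟩, _,
      isRun_cycleNFA_succ_iff.2 ⟨rfl, rfl⟩, rfl⟩

lemma not_accRun_cycleNFA_nil (ts : List (Fin (q + 1) × Unit × Fin (q + 1))) :
    ¬ (cycleNFA p q).AccRun [] ts := by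
  rintro ⟨r, hr, hrun⟩
  rw [(isRun_nil_iff.1 hrun).2] at hr
  exact zero_notMem_accept_cycleNFA hr

lemma lang_cycleNFA (hp : 0 < p) : (cycleNFA p q).lang = {w | w ≠ []} := by
  ext w
  obtain ⟨n, rfl⟩ : ∃ n, w = List.replicate n () :=
    ⟨w.length, List.eq_replicate_length.2 fun _ _ => rfl⟩
  cases n with
  | zero => simpa [lang] using not_accRun_cycleNFA_nil
  | succ i =>
    simp only [lang, Set.mem_ofPred_eq, accRun_cycleNFA_replicate_succ_iff]
    exact iff_of_true ⟨_, -(i : Fin q), by simpa using hp, rfl⟩ (by simp)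

lemma accProb_cycleNFA_nil (f : Fin (q + 1) × Unit × Fin (q + 1) → ℝ) :
    (cycleNFA p q).accProb f [] = 0 := by
  simp [accProb, not_accRun_cycleNFA_nil]

lemma accProb_cycleNFA_replicate_succ (f : Fin (q + 1) × Unit × Fin (q + 1) → ℝ) (i : ℕ) :
    (cycleNFA p q).accProb f (List.replicate (i + 1) ()) =
      ∑ z : Fin q with ((z + (i : Fin q) : Fin q) : ℕ) < p,
        f (0, (), z.succ) * runProb f (cycleRun z i) := by
  have hruns : {ts | (cycleNFA p q).AccRun (List.replicate (i + 1) ()) ts} =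
      (({z : Fin q | ((z + (i : Fin q) : Fin q) : ℕ) < p} : Finset (Fin q)).image
        fun z => (0, (), z.succ) :: cycleRun z i) := by
    ext ts
    simp [accRun_cycleNFA_replicate_succ_iff, eq_comm]
  have hinj : Function.Injective fun z : Fin q => ((0, (), z.succ) :: cycleRun z i) :=
    fun _ _ h => entry_injective (List.cons.inj h).1
  rw [accProb, hruns, finsum_mem_coe_finset, sum_image hinj.injOn]
  rfl

lemma outgoing_cycleNFA_zero :
    (cycleNFA p q).outgoing 0 () = univ.image fun z : Fin q => (0, (), z.succ) := by
  ext ⟨s, _, x⟩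
  simp only [outgoing, mem_filter, mem_image, mem_univ, true_and]
  constructor
  · rintro ⟨hmem, rfl, -⟩
    obtain ⟨z, rfl⟩ := zero_mem_trans_cycleNFA.1 hmem
    exact ⟨z, rfl⟩
  · rintro ⟨z, h⟩
    cases h
    exact ⟨zero_mem_trans_cycleNFA.2 ⟨z, rfl⟩, rfl, trivial⟩

lemma outgoing_cycleNFA_succ (z : Fin q) :
    (cycleNFA p q).outgoing z.succ () = {(z.succ, (), (z + 1).succ)} := by
  ext ⟨s, _, x⟩
  simp only [outgoing, mem_filter, mem_singleton]
  constructor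
  · rintro ⟨hmem, rfl, -⟩
    rw [succ_mem_trans_cycleNFA.1 hmem]
  · intro h
    cases h
    exact ⟨succ_mem_trans_cycleNFA.2 rfl, rfl, trivial⟩

namespace Resolver

variable (R : (cycleNFA p q).Resolver)

lemma runProb_cycleRun (z : Fin q) (i : ℕ) : runProb R.r (cycleRun z i) = 1 := by
  induction i generalizing z with
  | zero => rfl
  | succ i ih =>
    rw [cycleRun, runProb, List.map_cons, List.prod_cons,
      R.eq_one_of_outgoing_eq_singleton (outgoing_cycleNFA_succ z), one_mul]
    exact ih (z + 1)

lemma sum_cycleNFA_branches : ∑ z : Fin q, R.r (0, (), z.succ) = 1 := by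
  have h := R.sum_outgoing ⟨_, zero_mem_trans_cycleNFA.2 ⟨0, rfl⟩⟩
  rwa [outgoing_cycleNFA_zero, sum_image entry_injective.injOn] at h

lemma accProb_cycleNFA_replicate_succ (i : ℕ) :
    (cycleNFA p q).accProb R.r (List.replicate (i + 1) ()) =
      ∑ z : Fin q with ((z + (i : Fin q) : Fin q) : ℕ) < p, R.r (0, (), z.succ) := by
  simp only [NFA'.accProb_cycleNFA_replicate_succ, R.runProb_cycleRun, mul_one]

lemma uniform_cycleNFA_branch (z : Fin q) :
    (uniform (cycleNFA p q)).r (0, (), z.succ) = (q : ℝ)⁻¹ := by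
  rw [uniform_apply (zero_mem_trans_cycleNFA.2 ⟨z, rfl⟩)]
  dsimp only
  rw [outgoing_cycleNFA_zero, card_image_of_injective _ entry_injective, card_univ,
    Fintype.card_fin]

end Resolver

lemma card_filter_add_val_lt (hpq : p ≤ q) (x : Fin q) :
    #{z : Fin q | ((x + z : Fin q) : ℕ) < p} = p := by
  rw [card_equiv (Equiv.addLeft x) (t := {w : Fin q | (w : ℕ) < p}) (by simp),
    Fin.card_filter_val_lt, min_eq_right hpq]

lemma sum_accProb_cycleNFA (hpq : p ≤ q) (R : (cycleNFA p q).Resolver) :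
    ∑ i : Fin q, (cycleNFA p q).accProb R.r (List.replicate (i + 1) ()) = p := by
  simp only [R.accProb_cycleNFA_replicate_succ, Fin.cast_val_eq_self, sum_filter]
  rw [sum_comm]
  simp only [← sum_filter, sum_const, card_filter_add_val_lt hpq, nsmul_eq_mul]
  rw [← mul_sum, R.sum_cycleNFA_branches, mul_one]

theorem resolvable_cycleNFA_iff (hp : 0 < p) (hpq : p ≤ q) {μ : ℝ} :
    (cycleNFA p q).Resolvable μ ↔ 0 < μ ∧ μ ≤ p / q := by
  have hq : (0 : ℝ) < q := by exact_mod_cast Nat.pos_of_neZero q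
  constructor
  · rintro ⟨R, hR⟩
    rw [lang_cycleNFA hp, Set.ext_iff] at hR
    have hμ : 0 < μ := by simpa [accProb_cycleNFA_nil] using hR []
    have hword : ∀ i : ℕ, μ ≤ (cycleNFA p q).accProb R.r (List.replicate (i + 1) ()) :=
      fun i => (hR _).2 (by simp)
    refine ⟨hμ, (le_div_iff₀ hq).2 ?_⟩
    calc μ * q = ∑ _i : Fin q, μ := by simp [mul_comm]
      _ ≤ ∑ i : Fin q, (cycleNFA p q).accProb R.r (List.replicate (i + 1) ()) :=
          sum_le_sum fun i _ => hword i
      _ = p := sum_accProb_cycleNFA hpq R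
  · rintro ⟨hμ, hμle⟩
    refine ⟨Resolver.uniform _, ?_⟩
    rw [lang_cycleNFA hp]
    ext w
    obtain ⟨n, rfl⟩ : ∃ n, w = List.replicate n () :=
      ⟨w.length, List.eq_replicate_length.2 fun _ _ => rfl⟩
    cases n with
    | zero => simpa [accProb_cycleNFA_nil] using hμ
    | succ i =>
      have hprob : (cycleNFA p q).accProb (Resolver.uniform (cycleNFA p q)).r
          (List.replicate (i + 1) ()) = p / q := by
        simp only [Resolver.accProb_cycleNFA_replicate_succ, Resolver.uniform_cycleNFA_branch,
          sum_const, nsmul_eq_mul, add_comm _ (i : Fin q), card_filter_add_val_lt hpq,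
          div_eq_mul_inv]
      simpa [hprob] using hμle

end Cycle

end NFA'

/-- For every rational `0 < λ < 1` there is a unary NFA that is `λ`-resolvable
but not `(λ + ε)`-resolvable for any `ε > 0`. -/
theorem stmt0 (lam : ℚ) (h0 : 0 < lam) (h1 : lam < 1) :
    ∃ (n : ℕ) (A : NFA' Unit (Fin n)),
      A.Resolvable ((lam : ℝ)) ∧ ∀ ε : ℝ, 0 < ε → ¬ A.Resolvable ((lam : ℝ) + ε) := by
  have : NeZero lam.den := ⟨lam.den_nz⟩
  obtain ⟨p, hp⟩ := Int.eq_ofNat_of_zero_le (Rat.num_nonneg.2 h0.le)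
  have hlam : (lam : ℝ) = p / lam.den := by rw [Rat.cast_def, hp, Int.cast_natCast]
  have hden : (0 : ℝ) < lam.den := by positivity
  have hlam0 : (0 : ℝ) < lam := by exact_mod_cast h0
  have hlam1 : (lam : ℝ) < 1 := by exact_mod_cast h1
  rw [hlam] at hlam0 hlam1
  have hp0 : 0 < p := by exact_mod_cast (div_pos_iff_of_pos_right hden).1 hlam0
  have hpq : p ≤ lam.den := by exact_mod_cast ((div_lt_one hden).1 hlam1).le
  refine ⟨lam.den + 1, cycleNFA p lam.den, ?_, fun ε hε => ?_⟩
  · rw [resolvable_cycleNFA_iff hp0 hpq, hlam]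
    exact ⟨hlam0, le_rfl⟩
  · rw [resolvable_cycleNFA_iff hp0 hpq, hlam]
    intro h
    linarith [h.2]
end

section
/- Let P be a simple PFA over Σ = {a,b} whose underlying NFA A satisfies L(A) = Σ*, and let A' be an NFA over an alphabet Σ' ⊇ Σ that is a super-automaton of A (the states, accepting states and transitions of A are among those of A') and satisfies: (C1) for every state p of A' and every σ ∈ Σ' there are at most two distinct transitions (p, σ, q); (C2) every resolver R for A' with L((P_R)_{≥1/4}) = L(A') induces a simple PFA (all its positive probabilities lie in {1/2, 1} and its support is the full transition set of A'); (C3) L(A') is the disjoint union of two languages L_ext and L_ind such that, writing P' for the unique simple PFA based on A', (a) P'(w) ≥ 1/2 for every w ∈ L_ind, and (b) L_ext = {w'}·Σ* for a single word w' over Σ'∖Σ and P'(w'·w) = (1/2)·P(w) for every w ∈ Σ*. Then L(P_{≥1/2}) = Σ* if and only if A' is 1/4-resolvable. -/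
open scoped BigOperators

open NFA'

lemma accProb_of_not_lang {σ Q : Type} (A : NFA' σ Q) (f : Q × σ × Q → ℝ)
    (w : List σ) (h : w ∉ A.lang) : A.accProb f w = 0 := by
  have hempty : {ts | A.AccRun w ts} = ∅ := by
    ext ts
    simp only [Set.mem_setOf_eq, Set.mem_empty_iff_false, iff_false]
    exact fun h' => h ⟨ts, h'⟩
  rw [NFA'.accProb, hempty, finsum_mem_empty]

lemma two_val_sum {T : Type} (O : Finset T) (f g : T → ℝ)
    (hf : ∀ s ∈ O, f s = 1/2 ∨ f s = 1) (hg : ∀ s ∈ O, g s = 1/2 ∨ g s = 1)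
    (hfs : ∑ s ∈ O, f s = 1) (hgs : ∑ s ∈ O, g s = 1)
    (hcard : O.card ≤ 2) {t : T} (ht : t ∈ O) : f t = g t := by
  classical
  have hpos : 0 < O.card := Finset.card_pos.mpr ⟨t, ht⟩
  have hc : O.card = 1 ∨ O.card = 2 := by omega
  rcases hc with hc | hc
  · obtain ⟨x, hx⟩ := Finset.card_eq_one.mp hc
    subst hx
    simp only [Finset.mem_singleton] at ht
    subst ht
    simp only [Finset.sum_singleton] at hfs hgs
    rw [hfs, hgs]
  · obtain ⟨x, y, hxy, hO⟩ := Finset.card_eq_two.mp hc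
    subst hO
    rw [Finset.sum_pair hxy] at hfs hgs
    have hfx := hf x (by simp)
    have hfy := hf y (by simp)
    have hgx := hg x (by simp)
    have hgy := hg y (by simp)
    have hfx2 : f x = 1/2 := by rcases hfx with h | h <;> rcases hfy with h' | h' <;> linarith
    have hfy2 : f y = 1/2 := by linarith
    have hgx2 : g x = 1/2 := by rcases hgx with h | h <;> rcases hgy with h' | h' <;> linarith
    have hgy2 : g y = 1/2 := by linarith
    simp only [Finset.mem_insert, Finset.mem_singleton] at ht
    rcases ht with rfl | rfl
    · rw [hfx2, hgx2]
    · rw [hfy2, hgy2]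

lemma simple_resolver_eq {σ Q : Type} (A' : NFA' σ Q)
    (hC1 : ∀ (p : Q) (c : σ), ({q | (p, c, q) ∈ A'.trans} : Set Q).encard ≤ 2)
    (f g : Q × σ × Q → ℝ)
    (hfvals : ∀ t ∈ A'.trans, f t = 1/2 ∨ f t = 1)
    (hgvals : ∀ t ∈ A'.trans, g t = 1/2 ∨ g t = 1)
    (hfz : ∀ t, t ∉ A'.trans → f t = 0)
    (hgz : ∀ t, t ∉ A'.trans → g t = 0)
    (hfsum : ∀ p c, (∃ q, (p, c, q) ∈ A'.trans) →
      ∑ t ∈ A'.trans, {t : Q × σ × Q | t.1 = p ∧ t.2.1 = c}.indicator f t = 1)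
    (hgsum : ∀ p c, (∃ q, (p, c, q) ∈ A'.trans) →
      ∑ t ∈ A'.trans, {t : Q × σ × Q | t.1 = p ∧ t.2.1 = c}.indicator g t = 1) :
    f = g := by
  classical
  funext t
  by_cases ht : t ∈ A'.trans
  · obtain ⟨p, c, q⟩ := t
    set O : Finset (Q × σ × Q) := A'.trans.filter (fun s => s.1 = p ∧ s.2.1 = c) with hOdef
    have hmemO : ∀ s, s ∈ O ↔ s ∈ A'.trans ∧ s.1 = p ∧ s.2.1 = c := by
      intro s; simp [hOdef]
    have hfs : ∑ s ∈ O, f s = 1 := by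
      rw [hOdef, Finset.sum_filter]
      rw [← hfsum p c ⟨q, ht⟩]
      apply Finset.sum_congr rfl
      intro s _
      by_cases hs : s.1 = p ∧ s.2.1 = c <;> simp [Set.indicator_apply, hs]
    have hgs : ∑ s ∈ O, g s = 1 := by
      rw [hOdef, Finset.sum_filter]
      rw [← hgsum p c ⟨q, ht⟩]
      apply Finset.sum_congr rfl
      intro s _
      by_cases hs : s.1 = p ∧ s.2.1 = c <;> simp [Set.indicator_apply, hs]
    have hinj : Set.InjOn (fun s : Q × σ × Q => s.2.2) ↑O := by
      rintro ⟨x1, y1, z1⟩ h1 ⟨x2, y2, z2⟩ h2 h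
      rw [Finset.mem_coe, hmemO] at h1 h2
      simp only at h
      obtain ⟨_, rfl, rfl⟩ := h1
      obtain ⟨_, rfl, rfl⟩ := h2
      simp [h]
    have himg : ↑(O.image (fun s => s.2.2)) ⊆ ({q | (p, c, q) ∈ A'.trans} : Set Q) := by
      intro x hx
      simp only [Finset.coe_image, Set.mem_image, Finset.mem_coe] at hx
      obtain ⟨⟨x1, y1, z1⟩, hs, rfl⟩ := hx
      rw [hmemO] at hs
      obtain ⟨hs, rfl, rfl⟩ := hs
      exact hs
    have hcard2 : ((O.image (fun s => s.2.2)).card : ℕ∞) ≤ 2 := by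
      calc ((O.image (fun s => s.2.2)).card : ℕ∞)
          = (↑(O.image (fun s => s.2.2)) : Set Q).encard :=
            (Set.encard_coe_eq_coe_finsetCard _).symm
        _ ≤ ({q | (p, c, q) ∈ A'.trans} : Set Q).encard := Set.encard_mono himg
        _ ≤ 2 := hC1 p c
    have hcard : O.card ≤ 2 := by
      rw [← Finset.card_image_of_injOn hinj]
      exact_mod_cast hcard2
    have htO : (p, c, q) ∈ O := by rw [hmemO]; exact ⟨ht, rfl, rfl⟩
    exact two_val_sum O f g (fun s hs => hfvals s ((hmemO s).mp hs).1)
      (fun s hs => hgvals s ((hmemO s).mp hs).1) hfs hgs hcard htO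
  · rw [hfz t ht, hgz t ht]

/-- Correctness of the reduction: under conditions (C1)-(C3), universality of the
simple PFA `P` at threshold `1/2` is equivalent to `1/4`-resolvability of `A'`. -/
theorem stmt4 {σ Q : Type} (a b : σ) (hab : a ≠ b)
    (A A' : NFA' σ Q)
    -- `P`: a simple PFA based on `A`
    (Θ : Q × σ × Q → ℝ) (hPFA : IsPFA A Θ) (hSimple : IsSimple A Θ)
    -- `A` is an automaton over `Σ = {a, b}` and `L(A) = Σ*`
    (hAlphA : ∀ t ∈ A.trans, t.2.1 = a ∨ t.2.1 = b)
    (hAuniv : A.lang = {w : List σ | ∀ c ∈ w, c = a ∨ c = b})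
    -- `A'` is a super-automaton of `A`
    (hsuper_t : A.trans ⊆ A'.trans) (hsuper_f : A.accept ⊆ A'.accept)
    -- (C1): at most two outgoing transitions per state and letter
    (hC1 : ∀ (p : Q) (c : σ), ({q | (p, c, q) ∈ A'.trans} : Set Q).encard ≤ 2)
    -- (C2): any resolver witnessing `1/4`-resolvability of `A'` induces a simple PFA
    (hC2 : ∀ R : A'.Resolver, {w | (1/4 : ℝ) ≤ A'.accProb R.r w} = A'.lang →
        (∀ t ∈ A'.trans, R.r t = 1/2 ∨ R.r t = 1) ∧ (∀ t ∈ A'.trans, R.r t ≠ 0))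
    -- `P'`: the (unique) simple PFA based on `A'`
    (Θ' : Q × σ × Q → ℝ) (hPFA' : IsPFA A' Θ') (hSimple' : IsSimple A' Θ')
    -- (C3): `L(A')` is the disjoint union of `L_ext` and `L_ind`
    (Lext Lind : Set (List σ))
    (hC3union : A'.lang = Lext ∪ Lind) (hC3disj : Disjoint Lext Lind)
    -- (C3.a)
    (hC3a : ∀ w ∈ Lind, (1/2 : ℝ) ≤ A'.accProb Θ' w)
    -- (C3.b)
    (w' : List σ) (hw' : ∀ c ∈ w', ¬ (c = a ∨ c = b))
    (hLext : Lext = {u : List σ | ∃ w : List σ, (∀ c ∈ w, c = a ∨ c = b) ∧ u = w' ++ w})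
    (hC3b : ∀ w : List σ, (∀ c ∈ w, c = a ∨ c = b) →
        A'.accProb Θ' (w' ++ w) = (1/2 : ℝ) * A.accProb Θ w) :
    ({w : List σ | (1/2 : ℝ) ≤ A.accProb Θ w} = {w : List σ | ∀ c ∈ w, c = a ∨ c = b}) ↔
      A'.Resolvable (1/4 : ℝ) := by
  constructor
  · -- universality implies resolvability
    intro huniv
    refine ⟨{ r := Θ'
              nonneg := fun t => by
                by_cases h : t ∈ A'.trans
                · exact (hPFA'.1 t h).1.le
                · rw [hPFA'.2.1 t h]
              le_one := fun t => by
                by_cases h : t ∈ A'.trans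
                · exact (hPFA'.1 t h).2
                · rw [hPFA'.2.1 t h]; norm_num
              supp := fun t h => by
                by_contra hn
                exact h (hPFA'.2.1 t hn)
              sum_one := hPFA'.2.2 }, ?_⟩
    ext w
    simp only [Set.mem_setOf_eq]
    constructor
    · intro h14
      by_contra hw
      have h0 := accProb_of_not_lang A' Θ' w hw
      rw [h0] at h14
      norm_num at h14
    · intro hw
      rw [hC3union] at hw
      rcases hw with hw | hw
      · rw [hLext] at hw
        obtain ⟨v, hv, rfl⟩ := hw
        have hvP : (1/2 : ℝ) ≤ A.accProb Θ v := by
          have : v ∈ {w : List σ | (1/2 : ℝ) ≤ A.accProb Θ w} := by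
            rw [huniv]; exact hv
          exact this
        rw [hC3b v hv]
        linarith
      · have := hC3a w hw
        linarith
  · -- resolvability implies universality
    rintro ⟨R, hR⟩
    obtain ⟨hvals, hne⟩ := hC2 R hR
    have hEq : R.r = Θ' := by
      apply simple_resolver_eq A' hC1
      · exact hvals
      · exact hSimple'
      · intro t ht
        by_contra h0
        exact ht (R.supp t h0)
      · exact hPFA'.2.1
      · exact R.sum_one
      · exact hPFA'.2.2
    ext w
    simp only [Set.mem_setOf_eq]
    constructor
    · intro h12 c hc
      by_contra hcnot
      have hwn : w ∉ A.lang := by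
        rw [hAuniv]
        intro h
        exact hcnot (h c hc)
      have h0 := accProb_of_not_lang A Θ w hwn
      rw [h0] at h12
      norm_num at h12
    · intro hw
      have hmem : w' ++ w ∈ Lext := by
        rw [hLext]; exact ⟨w, hw, rfl⟩
      have hlang : w' ++ w ∈ A'.lang := by
        rw [hC3union]; exact Or.inl hmem
      rw [← hR] at hlang
      have h14 : (1/4 : ℝ) ≤ A'.accProb R.r (w' ++ w) := hlang
      rw [hEq, hC3b w hw] at h14
      linarith
end

section
/- Let P ∈ [0,1]^{d×d} be a row-stochastic matrix (a d-state Markov chain) and let I ∈ [0,1]^d be a probability row vector (an initial distribution). Then there exist a positive integer T dividing lcm(1, 2, …, d) (hence bounded by an exponential in d) and vectors π^(0), …, π^(T−1) ∈ [0,1]^d such that for every k ∈ {0, …, T−1}, lim_{n→∞} I·P^k·(P^T)^n = π^(k). Moreover, for each state q, π^(k)(q) is non-zero if and only if both: (1) q lies in a bottom strongly connected component of the digraph G_P with an edge p → q whenever P(p,q) > 0, and (2) there is a path in G_P of length k + T·ℓ, for some ℓ ≤ d, from some state p with I(p) > 0 to q. -/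
open scoped BigOperators

/-- `pathLen E n p q`: there is a path of length `n` from `p` to `q` along edges `E`. -/
def pathLen {α : Type} (E : α → α → Prop) : ℕ → α → α → Prop
  | 0 => fun p q => p = q
  | (n + 1) => fun p q => ∃ r, E p r ∧ pathLen E n r q

/-!
Put `T = lcm(1, …, d)` and `Q = P ^ T`. A state of a bottom strongly connected component lies on
a cycle of length at most `d`, hence on a cycle of length `T`: it carries a self-loop in the
support digraph of `Q`, whose bottom components have the same states as those of `P`. On a bottom
component of `Q` some power of `Q` is then positive, which contracts the oscillation of every
column of `Q ^ n` over the component; outside the bottom components the mass decays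
geometrically. So `Q ^ n` converges to some `L`, with `L p r > 0` exactly when `r` is recurrent
and reachable from `p`, and `π^(k) = I P^k L`.
-/

open Relation Filter Topology

section Paths

variable {α : Type} {E : α → α → Prop}

theorem pathLen_zero {p q : α} : pathLen E 0 p q ↔ p = q := Iff.rfl

theorem pathLen_succ {n : ℕ} {p q : α} :
    pathLen E (n + 1) p q ↔ ∃ r, E p r ∧ pathLen E n r q :=
  Iff.rfl

theorem pathLen_one {p q : α} : pathLen E 1 p q ↔ E p q :=
  ⟨fun ⟨_, h, hr⟩ => hr ▸ h, fun h => ⟨q, h, rfl⟩⟩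

theorem pathLen_add_iff {m n : ℕ} {p r : α} :
    pathLen E (m + n) p r ↔ ∃ q, pathLen E m p q ∧ pathLen E n q r := by
  induction m generalizing p with
  | zero => simp [pathLen_zero]
  | succ m ih =>
    simp only [Nat.succ_add, pathLen_succ, ih]
    exact ⟨fun ⟨s, hs, q, h₁, h₂⟩ => ⟨q, ⟨s, hs, h₁⟩, h₂⟩,
      fun ⟨q, ⟨s, hs, h₁⟩, h₂⟩ => ⟨s, hs, q, h₁, h₂⟩⟩

theorem pathLen_add {m n : ℕ} {p q r : α} (h₁ : pathLen E m p q) (h₂ : pathLen E n q r) :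
    pathLen E (m + n) p r :=
  pathLen_add_iff.2 ⟨q, h₁, h₂⟩

theorem pathLen_mul {c : ℕ} {q : α} (h : pathLen E c q q) (k : ℕ) :
    pathLen E (c * k) q q := by
  induction k with
  | zero => exact pathLen_zero.2 rfl
  | succ k ih => exact pathLen_add ih h

theorem pathLen_pathLen {T m : ℕ} {p q : α} :
    pathLen (pathLen E T) m p q ↔ pathLen E (T * m) p q := by
  induction m generalizing p with
  | zero => rfl
  | succ m ih => simp only [pathLen_succ, ih, Nat.mul_succ, add_comm _ T, pathLen_add_iff]

theorem reflTransGen_iff_exists_pathLen {p q : α} :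
    ReflTransGen E p q ↔ ∃ n, pathLen E n p q := by
  constructor
  · intro h
    induction h using ReflTransGen.head_induction_on with
    | refl => exact ⟨0, rfl⟩
    | head hpr _ ih => obtain ⟨n, hn⟩ := ih; exact ⟨n + 1, _, hpr, hn⟩
  · rintro ⟨n, h⟩
    induction n generalizing p with
    | zero => exact h ▸ .refl
    | succ n ih => obtain ⟨r, hpr, hr⟩ := h; exact .head hpr (ih hr)

theorem pathLen.reflTransGen {n : ℕ} {p q : α} (h : pathLen E n p q) : ReflTransGen E p q :=
  reflTransGen_iff_exists_pathLen.2 ⟨n, h⟩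

theorem exists_pathLen (hE : ∀ a, ∃ b, E a b) (n : ℕ) (p : α) : ∃ q, pathLen E n p q := by
  induction n generalizing p with
  | zero => exact ⟨p, rfl⟩
  | succ n ih => obtain ⟨r, hr⟩ := hE p; exact (ih r).imp fun q h => ⟨r, hr, h⟩

/-- Split the path at each of its `n + 1` positions; two of the split vertices coincide, and the
first piece of one split glued to the second piece of the other is shorter. -/
theorem pathLen.exists_lt [Fintype α] {n : ℕ} {p q : α} (h : pathLen E n p q)
    (hn : Fintype.card α ≤ n) : ∃ m < n, pathLen E m p q := by
  have hsplit (i : Fin (n + 1)) : ∃ v, pathLen E i p v ∧ pathLen E (n - i) v q :=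
    pathLen_add_iff.1 (by rwa [Nat.add_sub_cancel' (Nat.lt_succ_iff.1 i.2)])
  choose v hv using hsplit
  obtain ⟨i, j, hij, hv_eq⟩ := Fintype.exists_ne_map_eq_of_card_lt v (by simp; omega)
  wlog hlt : i < j generalizing i j
  · exact this j i hij.symm hv_eq.symm (lt_of_le_of_ne (not_lt.1 hlt) hij.symm)
  exact ⟨i + (n - j), by omega, pathLen_add (hv i).1 (hv_eq ▸ (hv j).2)⟩

theorem Relation.ReflTransGen.exists_pathLen_lt_card [Fintype α] {p q : α}
    (h : ReflTransGen E p q) : ∃ n < Fintype.card α, pathLen E n p q := by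
  obtain ⟨n, hn⟩ := reflTransGen_iff_exists_pathLen.1 h
  induction n using Nat.strong_induction_on with
  | _ n ih =>
    by_cases hlt : n < Fintype.card α
    · exact ⟨n, hlt, hn⟩
    · obtain ⟨m, hm, hm'⟩ := hn.exists_lt (not_lt.1 hlt)
      exact ih m hm hm'

theorem reflTransGen_pathLen_iff {T : ℕ} {p q : α} :
    ReflTransGen (pathLen E T) p q ↔ ∃ m, pathLen E (T * m) p q := by
  simp only [reflTransGen_iff_exists_pathLen, pathLen_pathLen]

theorem exists_pathLen_add_mul_iff [Fintype α] {k T N : ℕ} (hN : Fintype.card α ≤ N)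
    {p q : α} : (∃ s, pathLen E k p s ∧ ReflTransGen (pathLen E T) s q) ↔
      ∃ l ≤ N, pathLen E (k + T * l) p q := by
  constructor
  · rintro ⟨s, hps, hsq⟩
    obtain ⟨l, hl, hsq⟩ := hsq.exists_pathLen_lt_card
    exact ⟨l, by omega, pathLen_add hps (pathLen_pathLen.1 hsq)⟩
  · rintro ⟨l, -, h⟩
    obtain ⟨s, hps, hsq⟩ := pathLen_add_iff.1 h
    exact ⟨s, hps, reflTransGen_pathLen_iff.2 ⟨l, hsq⟩⟩

end Paths

section Recurrence

variable {α : Type} {E : α → α → Prop}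

/-- `q` lies in a bottom strongly connected component of `E`. -/
def IsRecurrent (E : α → α → Prop) (q : α) : Prop :=
  ∀ r, ReflTransGen E q r → ReflTransGen E r q

theorem IsRecurrent.of_reflTransGen {q r : α} (hq : IsRecurrent E q)
    (h : ReflTransGen E q r) : IsRecurrent E r :=
  fun s hs => (hq s (h.trans hs)).trans h

theorem exists_isRecurrent [Finite α] (p : α) :
    ∃ q, ReflTransGen E p q ∧ IsRecurrent E q := by
  obtain ⟨q, hpq, hmin⟩ := Set.exists_min_image {q | ReflTransGen E p q}
    (fun q => {s | ReflTransGen E q s}.ncard) (Set.toFinite _) ⟨p, .refl⟩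
  refine ⟨q, hpq, fun r hqr => by_contra fun hrq => ?_⟩
  have hssub : {s | ReflTransGen E r s} ⊂ {s | ReflTransGen E q s} :=
    ⟨fun s hs => hqr.trans hs, fun h => hrq (h (ReflTransGen.refl (a := q)))⟩
  exact (Set.ncard_lt_ncard hssub).not_ge (hmin r (hpq.trans hqr))

theorem IsRecurrent.pathLen_self [Fintype α] (hE : ∀ a, ∃ b, E a b) {q : α}
    (hq : IsRecurrent E q) {T : ℕ} (hT : ∀ k, 0 < k → k ≤ Fintype.card α → k ∣ T) :
    pathLen E T q q := by
  obtain ⟨r, hqr⟩ := hE q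
  obtain ⟨n, hn, hrq⟩ := (hq r (.single hqr)).exists_pathLen_lt_card
  obtain ⟨c, rfl⟩ := hT (1 + n) (by omega) (by omega)
  exact pathLen_mul (pathLen_add (pathLen_one.2 hqr) hrq) c

theorem isRecurrent_pathLen_iff (hE : ∀ a, ∃ b, E a b) {T : ℕ} (hT : 0 < T) {q : α} :
    IsRecurrent (pathLen E T) q ↔ IsRecurrent E q := by
  constructor
  · intro hq r hqr
    obtain ⟨n, hn⟩ := reflTransGen_iff_exists_pathLen.1 hqr
    obtain ⟨s, hrs⟩ := exists_pathLen hE (T * n - n) r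
    have hqs : pathLen E (T * n) q s := by
      simpa [Nat.add_sub_cancel' (Nat.le_mul_of_pos_left n hT)] using pathLen_add hn hrs
    obtain ⟨m, hsq⟩ :=
      reflTransGen_pathLen_iff.1 (hq s (reflTransGen_pathLen_iff.2 ⟨n, hqs⟩))
    exact hrs.reflTransGen.trans hsq.reflTransGen
  · intro hq r hqr
    obtain ⟨m, hm⟩ := reflTransGen_pathLen_iff.1 hqr
    obtain ⟨n, hn⟩ := reflTransGen_iff_exists_pathLen.1 (hq r hm.reflTransGen)
    -- from `r` to `q`, then `T - 1` more times around the cycle `q → r → q`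
    have h := pathLen_add hn (pathLen_mul (pathLen_add hm hn) (T - 1))
    obtain ⟨t, rfl⟩ := Nat.exists_eq_add_of_lt hT
    refine reflTransGen_pathLen_iff.2 ⟨n + t * m, ?_⟩
    convert h using 1
    simp only [Nat.add_sub_cancel]
    ring

end Recurrence

theorem tendsto_zero_of_antitone_of_le_mul {v : ℕ → ℝ} (hv : Antitone v)
    (h0 : ∀ n, 0 ≤ v n) {c : ℝ} (hc : c < 1) {K : ℕ} (hK : ∀ n, v (n + K) ≤ c * v n) :
    Tendsto v atTop (𝓝 0) := by
  have hlim := tendsto_atTop_ciInf hv ⟨0, Set.forall_mem_range.2 h0⟩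
  have hle : ⨅ n, v n ≤ c * ⨅ n, v n :=
    le_of_tendsto_of_tendsto' (hlim.comp (tendsto_add_atTop_nat K)) (hlim.const_mul c) hK
  have hnonneg : 0 ≤ ⨅ n, v n := le_ciInf h0
  rwa [show ⨅ n, v n = 0 by nlinarith] at hlim

theorem exists_tendsto_of_gap_le_mul {f m M : ℕ → ℝ} (hm : Monotone m) (hM : Antitone M)
    (hmf : ∀ n, m n ≤ f n) (hfM : ∀ n, f n ≤ M n) {c : ℝ} (hc : c < 1) {K : ℕ}
    (hgap : ∀ n, M (n + K) - m (n + K) ≤ c * (M n - m n)) :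
    ∃ l, Tendsto f atTop (𝓝 l) ∧ ∀ n, m n ≤ l := by
  have hgap_lim : Tendsto (fun n => M n - m n) atTop (𝓝 0) :=
    tendsto_zero_of_antitone_of_le_mul (fun a b hab => sub_le_sub (hM hab) (hm hab))
      (fun n => sub_nonneg.2 ((hmf n).trans (hfM n))) hc hgap
  have hM_lim := tendsto_atTop_ciInf hM
    ⟨m 0, Set.forall_mem_range.2 fun n => (hm (Nat.zero_le n)).trans ((hmf n).trans (hfM n))⟩
  have hm_lim : Tendsto m atTop (𝓝 (⨅ n, M n)) := by simpa using hM_lim.sub hgap_lim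
  exact ⟨_, tendsto_of_tendsto_of_tendsto_of_le_of_le hm_lim hM_lim hmf hfM,
    hm.ge_of_tendsto hm_lim⟩

theorem cauchySeq_of_forall_approx {β : Type*} [PseudoMetricSpace β] {a : ℕ → β}
    (h : ∀ ε > 0, ∃ b : ℕ → β, CauchySeq b ∧ ∀ᶠ n in atTop, dist (a n) (b n) ≤ ε) :
    CauchySeq a := by
  refine Metric.cauchySeq_iff.2 fun ε hε => ?_
  obtain ⟨b, hb, hab⟩ := h (ε / 3) (by positivity)
  obtain ⟨N₁, hN₁⟩ := Metric.cauchySeq_iff.1 hb (ε / 3) (by positivity)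
  obtain ⟨N₂, hN₂⟩ := eventually_atTop.1 hab
  refine ⟨max N₁ N₂, fun m hm n hn => ?_⟩
  have h₁ := hN₂ m (le_of_max_le_right hm)
  have h₂ := hN₂ n (le_of_max_le_right hn)
  have h₃ := hN₁ m (le_of_max_le_left hm) n (le_of_max_le_left hn)
  calc dist (a m) (a n) ≤ dist (a m) (b m) + dist (b m) (b n) + dist (b n) (a n) :=
        dist_triangle4 _ _ _ _
    _ < ε := by rw [dist_comm (b n)]; linarith

theorem Finset.sum_mul_le_sup'_sub {ι : Type*} {D : Finset ι} (hne : D.Nonempty)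
    {w f : ι → ℝ} (hw : ∀ v ∈ D, 0 ≤ w v) (hw1 : ∑ v ∈ D, w v = 1) {v₀ : ι} (hv₀ : v₀ ∈ D) :
    ∑ v ∈ D, w v * f v ≤ D.sup' hne f - w v₀ * (D.sup' hne f - f v₀) := by
  have h : w v₀ * (D.sup' hne f - f v₀) ≤ ∑ v ∈ D, w v * (D.sup' hne f - f v) :=
    Finset.single_le_sum (f := fun v => w v * (D.sup' hne f - f v))
      (fun v hv => mul_nonneg (hw v hv) (sub_nonneg.2 (Finset.le_sup' f hv))) hv₀
  simp only [mul_sub, Finset.sum_sub_distrib, ← Finset.sum_mul, hw1, one_mul] at h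
  linarith

theorem Finset.inf'_le_sum_mul {ι : Type*} {D : Finset ι} (hne : D.Nonempty) {w f : ι → ℝ}
    (hw : ∀ v ∈ D, 0 ≤ w v) (hw1 : ∑ v ∈ D, w v = 1) : D.inf' hne f ≤ ∑ v ∈ D, w v * f v :=
  calc D.inf' hne f = ∑ v ∈ D, w v * D.inf' hne f := by rw [← Finset.sum_mul, hw1, one_mul]
    _ ≤ ∑ v ∈ D, w v * f v := Finset.sum_le_sum fun v hv =>
      mul_le_mul_of_nonneg_left (Finset.inf'_le f hv) (hw v hv)

namespace Matrix

theorem dotProduct_pos_iff {ι : Type*} [Fintype ι] {x y : ι → ℝ} (hx : ∀ i, 0 ≤ x i)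
    (hy : ∀ i, 0 ≤ y i) : 0 < x ⬝ᵥ y ↔ ∃ i, 0 < x i ∧ 0 < y i := by
  rw [dotProduct, Finset.sum_pos_iff_of_nonneg fun i _ => mul_nonneg (hx i) (hy i)]
  simp only [Finset.mem_univ, true_and,
    fun i => mul_pos_iff.trans (or_iff_left fun h => (hx i).not_gt h.1)]

theorem vecMul_pos_iff {ι κ : Type*} [Fintype ι] {x : ι → ℝ} {M : Matrix ι κ ℝ}
    (hx : ∀ i, 0 ≤ x i) (hM : ∀ i j, 0 ≤ M i j) (j : κ) :
    0 < (x ᵥ* M) j ↔ ∃ i, 0 < x i ∧ 0 < M i j :=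
  dotProduct_pos_iff hx (hM · j)

theorem mul_apply_pos_iff {ι κ μ : Type*} [Fintype κ] {A : Matrix ι κ ℝ} {B : Matrix κ μ ℝ}
    (hA : ∀ i j, 0 ≤ A i j) (hB : ∀ i j, 0 ≤ B i j) (i : ι) (k : μ) :
    0 < (A * B) i k ↔ ∃ j, 0 < A i j ∧ 0 < B j k :=
  vecMul_pos_iff (hA i) hB k

variable {ι : Type} [Fintype ι]

abbrev posRel (M : Matrix ι ι ℝ) : ι → ι → Prop := fun i j => 0 < M i j

variable [DecidableEq ι] {Q : Matrix ι ι ℝ}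

theorem pow_apply_pos_iff_pathLen (hQ : ∀ i j, 0 ≤ Q i j) (n : ℕ) (i j : ι) :
    0 < (Q ^ n) i j ↔ pathLen Q.posRel n i j := by
  induction n generalizing i with
  | zero => by_cases h : i = j <;> simp [h, pathLen_zero]
  | succ n ih =>
    simp only [pow_succ', mul_apply_pos_iff hQ (pow_apply_nonneg hQ n), ih, pathLen_succ]

theorem posRel_pow (hQ : ∀ i j, 0 ≤ Q i j) (n : ℕ) : (Q ^ n).posRel = pathLen Q.posRel n :=
  funext fun i => funext fun j => propext (pow_apply_pos_iff_pathLen hQ n i j)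

theorem exists_posRel_of_mem_rowStochastic (hQ : Q ∈ rowStochastic ℝ ι) (i : ι) :
    ∃ j, Q.posRel i j := by
  have h : 0 < ∑ j, Q i j := by simp [sum_row_of_mem_rowStochastic hQ]
  simpa using (Finset.sum_pos_iff_of_nonneg fun j _ => nonneg_of_mem_rowStochastic hQ).1 h

theorem vecMul_apply_mem_Icc {x : ι → ℝ} (hx : ∀ i, 0 ≤ x i) (hx1 : ∑ i, x i = 1)
    (hQ : Q ∈ rowStochastic ℝ ι) (j : ι) : (x ᵥ* Q) j ∈ Set.Icc 0 1 := by
  refine ⟨nonneg_vecMul_of_mem_rowStochastic hQ hx j, ?_⟩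
  calc (x ᵥ* Q) j = ∑ i, x i * Q i j := rfl
    _ ≤ ∑ i, x i := Finset.sum_le_sum fun i _ =>
      mul_le_of_le_one_right (hx i) (le_one_of_mem_rowStochastic hQ)
    _ = 1 := hx1

section ClosedSet

variable {D : Finset ι}

theorem pow_apply_eq_zero_of_closed (hD : ∀ t ∈ D, ∀ u, 0 < Q t u → u ∈ D)
    (hQ : ∀ i j, 0 ≤ Q i j) (n : ℕ) {t u : ι} (ht : t ∈ D) (hu : u ∉ D) :
    (Q ^ n) t u = 0 := by
  have hreach {u : ι} (h : ReflTransGen Q.posRel t u) : u ∈ D := by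
    induction h with
    | refl => exact ht
    | tail _ h ih => exact hD _ ih _ h
  refine ((pow_apply_nonneg hQ n t u).eq_or_lt.resolve_right fun hpos => hu ?_).symm
  exact hreach ((pow_apply_pos_iff_pathLen hQ n t u).1 hpos).reflTransGen

theorem sum_pow_apply_of_closed (hD : ∀ t ∈ D, ∀ u, 0 < Q t u → u ∈ D)
    (hQ : Q ∈ rowStochastic ℝ ι) (n : ℕ) {t : ι} (ht : t ∈ D) :
    ∑ u ∈ D, (Q ^ n) t u = 1 := by
  rw [← sum_row_of_mem_rowStochastic (pow_mem hQ n) t]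
  exact Finset.sum_subset (Finset.subset_univ D) fun u _ hu =>
    pow_apply_eq_zero_of_closed hD (fun _ _ => nonneg_of_mem_rowStochastic hQ) n ht hu

theorem pow_add_apply_of_closed (hD : ∀ t ∈ D, ∀ u, 0 < Q t u → u ∈ D)
    (hQ : ∀ i j, 0 ≤ Q i j) (j n : ℕ) {t : ι} (ht : t ∈ D) (r : ι) :
    (Q ^ (j + n)) t r = ∑ u ∈ D, (Q ^ j) t u * (Q ^ n) u r := by
  rw [pow_add, mul_apply]
  exact (Finset.sum_subset (Finset.subset_univ D) fun u _ hu => by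
    rw [pow_apply_eq_zero_of_closed hD hQ j ht hu, zero_mul]).symm

/-- Over `D`, the maximum of a column of `Q ^ n` does not increase and its minimum does not
decrease; the gap between them shrinks by the factor `1 - δ` every `K` steps, `δ` being the
least entry of `Q ^ K` on `D`. -/
theorem exists_tendsto_pow_apply_of_closed (hD : ∀ t ∈ D, ∀ u, 0 < Q t u → u ∈ D)
    (hQ : Q ∈ rowStochastic ℝ ι) {K : ℕ} (hK : ∀ t ∈ D, ∀ u ∈ D, 0 < (Q ^ K) t u)
    {t : ι} (ht : t ∈ D) (r : ι) :
    ∃ l, Tendsto (fun n => (Q ^ n) t r) atTop (𝓝 l) ∧ (r ∈ D → 0 < l) := by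
  have hne : D.Nonempty := ⟨t, ht⟩
  have hQ0 : ∀ i j, 0 ≤ Q i j := fun _ _ => nonneg_of_mem_rowStochastic hQ
  let col (n : ℕ) (u : ι) : ℝ := (Q ^ n) u r
  let M (n : ℕ) : ℝ := D.sup' hne (col n)
  let m (n : ℕ) : ℝ := D.inf' hne (col n)
  have hmM (n : ℕ) : m n ≤ M n := (Finset.inf'_le _ ht).trans (Finset.le_sup' _ ht)
  have hle (j n : ℕ) {u v₀ : ι} (hu : u ∈ D) (hv₀ : v₀ ∈ D) :
      col (j + n) u ≤ M n - (Q ^ j) u v₀ * (M n - col n v₀) := by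
    rw [show col (j + n) u = _ from pow_add_apply_of_closed hD hQ0 j n hu r]
    exact Finset.sum_mul_le_sup'_sub hne (fun v _ => pow_apply_nonneg hQ0 j u v)
      (sum_pow_apply_of_closed hD hQ j hu) hv₀
  have hge (j n : ℕ) {u : ι} (hu : u ∈ D) : m n ≤ col (j + n) u := by
    rw [show col (j + n) u = _ from pow_add_apply_of_closed hD hQ0 j n hu r]
    exact Finset.inf'_le_sum_mul hne (fun v _ => pow_apply_nonneg hQ0 j u v)
      (sum_pow_apply_of_closed hD hQ j hu)
  have hM_anti : Antitone M := antitone_nat_of_succ_le fun n =>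
    Finset.sup'_le _ _ fun u hu => by
      have := mul_nonneg (pow_apply_nonneg hQ0 1 u u) (sub_nonneg.2 (Finset.le_sup' (col n) hu))
      linarith [add_comm 1 n ▸ hle 1 n hu hu]
  have hm_mono : Monotone m := monotone_nat_of_le_succ fun n =>
    Finset.le_inf' _ _ fun u hu => add_comm 1 n ▸ hge 1 n hu
  obtain ⟨δ, hδ, hδ_le⟩ : ∃ δ > 0, ∀ u ∈ D, ∀ v ∈ D, δ ≤ (Q ^ K) u v := by
    obtain ⟨x, hx, hmin⟩ := Finset.exists_min_image (D ×ˢ D) (fun x => (Q ^ K) x.1 x.2)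
      (hne.product hne)
    exact ⟨_, hK _ (Finset.mem_product.1 hx).1 _ (Finset.mem_product.1 hx).2,
      fun u hu v hv => hmin (u, v) (Finset.mem_product.2 ⟨hu, hv⟩)⟩
  have hgap (n : ℕ) : M (n + K) - m (n + K) ≤ (1 - δ) * (M n - m n) := by
    obtain ⟨v₀, hv₀, hmv₀⟩ : ∃ v₀ ∈ D, m n = col n v₀ := Finset.exists_mem_eq_inf' hne (col n)
    have hM_drop : M (n + K) ≤ M n - δ * (M n - m n) := Finset.sup'_le _ _ fun u hu => by
      have := mul_le_mul_of_nonneg_right (hδ_le u hu v₀ hv₀) (sub_nonneg.2 (hmM n))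
      rw [hmv₀] at this ⊢
      linarith [add_comm n K ▸ hle K n hu hv₀]
    nlinarith [hm_mono (Nat.le_add_right n K)]
  obtain ⟨l, hl, hml⟩ := exists_tendsto_of_gap_le_mul hm_mono hM_anti
    (fun n => Finset.inf'_le (col n) ht) (fun n => Finset.le_sup' (col n) ht) (by linarith) hgap
  exact ⟨l, hl, fun hr =>
    ((Finset.lt_inf'_iff hne).2 fun u hu => hK u hu r hr).trans_le (hml K)⟩

/-- The mass outside `D` does not increase, and it shrinks by the factor `c < 1` every `K`
steps, `1 - c` being the least mass that `Q ^ K` moves into `D` from a single state. -/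
theorem tendsto_sum_compl_pow_apply (hD : ∀ t ∈ D, ∀ u, 0 < Q t u → u ∈ D)
    (hQ : Q ∈ rowStochastic ℝ ι) {K : ℕ} (hK : ∀ p, ∃ u ∈ D, 0 < (Q ^ K) p u)
    (p : ι) : Tendsto (fun n => ∑ u ∈ Dᶜ, (Q ^ n) p u) atTop (𝓝 0) := by
  have hQ0 : ∀ i j, 0 ≤ Q i j := fun _ _ => nonneg_of_mem_rowStochastic hQ
  let v (n : ℕ) (p : ι) : ℝ := ∑ u ∈ Dᶜ, (Q ^ n) p u
  have hv_add (n : ℕ) (p : ι) : v n p + ∑ u ∈ D, (Q ^ n) p u = 1 := by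
    rw [Finset.sum_compl_add_sum, sum_row_of_mem_rowStochastic (pow_mem hQ n)]
  have hv_le (n : ℕ) (p : ι) : v n p ≤ 1 := by
    linarith [hv_add n p, Finset.sum_nonneg fun u (_ : u ∈ D) => pow_apply_nonneg hQ0 n p u]
  have hstep (n j : ℕ) : v (n + j) p = ∑ u ∈ Dᶜ, (Q ^ n) p u * v j u := by
    have hvD : ∀ u ∈ D, v j u = 0 := fun u hu => Finset.sum_eq_zero fun w hw =>
      pow_apply_eq_zero_of_closed hD hQ0 j hu (Finset.mem_compl.1 hw)
    calc v (n + j) p = ∑ u, (Q ^ n) p u * v j u := by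
          simp only [v, pow_add, mul_apply, Finset.mul_sum]; exact Finset.sum_comm
      _ = ∑ u ∈ Dᶜ, (Q ^ n) p u * v j u :=
          (Finset.sum_subset (Finset.subset_univ _) fun u _ hu => by
            rw [hvD u (by simpa using hu), mul_zero]).symm
  have hanti : Antitone fun n => v n p := antitone_nat_of_succ_le fun n => by
    rw [hstep]
    exact Finset.sum_le_sum fun u _ =>
      mul_le_of_le_one_right (pow_apply_nonneg hQ0 n p u) (hv_le 1 u)
  obtain ⟨c, hc, hvc⟩ : ∃ c < 1, ∀ u, v K u ≤ c := by
    refine ⟨Finset.univ.sup' ⟨p, Finset.mem_univ p⟩ (v K),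
      (Finset.sup'_lt_iff _).2 fun u _ => ?_, fun u => Finset.le_sup' _ (Finset.mem_univ u)⟩
    obtain ⟨w, hw, hpos⟩ := hK u
    linarith [hv_add K u,
      Finset.single_le_sum (fun w (_ : w ∈ D) => pow_apply_nonneg hQ0 K u w) hw]
  refine tendsto_zero_of_antitone_of_le_mul hanti
    (fun n => Finset.sum_nonneg fun u _ => pow_apply_nonneg hQ0 n p u) hc (K := K) fun n => ?_
  show v (n + K) p ≤ c * v n p
  rw [hstep, Finset.mul_sum]
  exact Finset.sum_le_sum fun u _ => by
    rw [mul_comm c]; exact mul_le_mul_of_nonneg_left (hvc u) (pow_apply_nonneg hQ0 n p u)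

end ClosedSet

theorem exists_isRecurrent_pow_card_pos (hQ : Q ∈ rowStochastic ℝ ι) (p : ι) :
    ∃ u, IsRecurrent Q.posRel u ∧ 0 < (Q ^ Fintype.card ι) p u := by
  obtain ⟨q, hpq, hq⟩ := exists_isRecurrent (E := Q.posRel) p
  obtain ⟨n, hn, hpath⟩ := hpq.exists_pathLen_lt_card
  obtain ⟨u, hu⟩ :=
    exists_pathLen (exists_posRel_of_mem_rowStochastic hQ) (Fintype.card ι - n) q
  refine ⟨u, hq.of_reflTransGen hu.reflTransGen, ?_⟩
  rw [pow_apply_pos_iff_pathLen (fun _ _ => nonneg_of_mem_rowStochastic hQ),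
    ← Nat.add_sub_cancel' hn.le]
  exact pathLen_add hpath hu

theorem tendsto_pow_apply_of_not_isRecurrent (hQ : Q ∈ rowStochastic ℝ ι) {r : ι}
    (hr : ¬ IsRecurrent Q.posRel r) (p : ι) : Tendsto (fun n => (Q ^ n) p r) atTop (𝓝 0) := by
  classical
  have hQ0 : ∀ i j, 0 ≤ Q i j := fun _ _ => nonneg_of_mem_rowStochastic hQ
  let R := Finset.univ.filter (IsRecurrent Q.posRel)
  have hR : ∀ t ∈ R, ∀ u, 0 < Q t u → u ∈ R := fun t ht u htu => by
    simpa [R] using (Finset.mem_filter.1 ht).2.of_reflTransGen (.single htu)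
  have hK (p : ι) : ∃ u ∈ R, 0 < (Q ^ Fintype.card ι) p u := by
    simpa [R] using exists_isRecurrent_pow_card_pos hQ p
  have hrR : r ∈ Rᶜ := by simpa [R] using hr
  exact squeeze_zero (fun n => pow_apply_nonneg hQ0 n p r)
    (fun n => Finset.single_le_sum (f := fun u => (Q ^ n) p u)
      (fun u _ => pow_apply_nonneg hQ0 n p u) hrR)
    (tendsto_sum_compl_pow_apply hR hQ hK p)

theorem _root_.IsRecurrent.pow_card_pos (hQ : Q ∈ rowStochastic ℝ ι)
    (hloop : ∀ q, IsRecurrent Q.posRel q → 0 < Q q q) {s t u : ι} (hs : IsRecurrent Q.posRel s)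
    (ht : ReflTransGen Q.posRel s t) (hu : ReflTransGen Q.posRel s u) :
    0 < (Q ^ Fintype.card ι) t u := by
  obtain ⟨n, hn, hpath⟩ := ((hs t ht).trans hu).exists_pathLen_lt_card
  have hself : pathLen Q.posRel 1 u u := pathLen_one.2 (hloop u (hs.of_reflTransGen hu))
  rw [pow_apply_pos_iff_pathLen (fun _ _ => nonneg_of_mem_rowStochastic hQ),
    ← Nat.add_sub_cancel' hn.le]
  simpa using pathLen_add hpath (pathLen_mul hself (Fintype.card ι - n))

theorem _root_.IsRecurrent.exists_tendsto_pow_apply (hQ : Q ∈ rowStochastic ℝ ι)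
    (hloop : ∀ q, IsRecurrent Q.posRel q → 0 < Q q q) {s : ι} (hs : IsRecurrent Q.posRel s)
    (r : ι) : ∃ l, Tendsto (fun n => (Q ^ n) s r) atTop (𝓝 l) ∧
      (ReflTransGen Q.posRel s r → 0 < l) := by
  classical
  let D := Finset.univ.filter (ReflTransGen Q.posRel s)
  have hD : ∀ t ∈ D, ∀ u, 0 < Q t u → u ∈ D := fun t ht u htu => by
    simpa [D] using (Finset.mem_filter.1 ht).2.tail htu
  have hK : ∀ t ∈ D, ∀ u ∈ D, 0 < (Q ^ Fintype.card ι) t u := fun t ht u hu =>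
    hs.pow_card_pos hQ hloop (Finset.mem_filter.1 ht).2 (Finset.mem_filter.1 hu).2
  simpa [D] using exists_tendsto_pow_apply_of_closed hD hQ hK (t := s)
    (Finset.mem_filter.2 ⟨Finset.mem_univ _, .refl⟩) r

/-- Rows started in a recurrent state converge; from an arbitrary state, after `N` steps all
but an arbitrarily small mass sits on recurrent states, so the row is uniformly close to a
convergent sequence. -/
theorem exists_tendsto_pow_apply (hQ : Q ∈ rowStochastic ℝ ι)
    (hloop : ∀ q, IsRecurrent Q.posRel q → 0 < Q q q) (p r : ι) :
    ∃ l, Tendsto (fun n => (Q ^ n) p r) atTop (𝓝 l) := by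
  classical
  have hQ0 : ∀ i j, 0 ≤ Q i j := fun _ _ => nonneg_of_mem_rowStochastic hQ
  let R := Finset.univ.filter (IsRecurrent Q.posRel)
  have htrans : Tendsto (fun n => ∑ u ∈ Rᶜ, (Q ^ n) p u) atTop (𝓝 0) := by
    simpa using tendsto_finsetSum Rᶜ fun u hu =>
      tendsto_pow_apply_of_not_isRecurrent hQ (by simpa [R] using hu) p
  refine cauchySeq_tendsto_of_complete (cauchySeq_of_forall_approx fun ε hε => ?_)
  obtain ⟨N, hN⟩ := (htrans.eventually (ge_mem_nhds hε)).exists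
  choose! l hl using fun u (hu : u ∈ R) =>
    IsRecurrent.exists_tendsto_pow_apply hQ hloop (Finset.mem_filter.1 hu).2 r
  refine ⟨fun n => ∑ u ∈ R, (Q ^ N) p u * (Q ^ (n - N)) u r,
    (tendsto_finsetSum R fun u hu =>
      ((hl u hu).1.comp (tendsto_sub_atTop_nat N)).const_mul _).cauchySeq,
    eventually_atTop.2 ⟨N, fun n hn => ?_⟩⟩
  have hsplit : (Q ^ n) p r = ∑ u ∈ R, (Q ^ N) p u * (Q ^ (n - N)) u r +
      ∑ u ∈ Rᶜ, (Q ^ N) p u * (Q ^ (n - N)) u r := by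
    rw [Finset.sum_add_sum_compl, ← mul_apply, ← pow_add, Nat.add_sub_cancel' hn]
  rw [Real.dist_eq, hsplit, add_sub_cancel_left,
    abs_of_nonneg (Finset.sum_nonneg fun u _ => mul_nonneg (pow_apply_nonneg hQ0 _ _ _)
      (pow_apply_nonneg hQ0 _ _ _))]
  exact (Finset.sum_le_sum fun u _ => mul_le_of_le_one_right (pow_apply_nonneg hQ0 _ _ _)
    (le_one_of_mem_rowStochastic (pow_mem hQ _))).trans hN

theorem exists_tendsto_pow (hQ : Q ∈ rowStochastic ℝ ι)
    (hloop : ∀ q, IsRecurrent Q.posRel q → 0 < Q q q) :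
    ∃ L : Matrix ι ι ℝ, Tendsto (Q ^ ·) atTop (𝓝 L) ∧ (∀ p r, 0 ≤ L p r) ∧
      ∀ p r, 0 < L p r ↔ IsRecurrent Q.posRel r ∧ ReflTransGen Q.posRel p r := by
  have hQ0 : ∀ i j, 0 ≤ Q i j := fun _ _ => nonneg_of_mem_rowStochastic hQ
  obtain ⟨L, hL⟩ :
      ∃ L : Matrix ι ι ℝ, ∀ p r, Tendsto (fun n => (Q ^ n) p r) atTop (𝓝 (L p r)) :=
    ⟨_, fun p r => (exists_tendsto_pow_apply hQ hloop p r).choose_spec⟩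
  have hlim : Tendsto (Q ^ ·) atTop (𝓝 L) :=
    tendsto_pi_nhds.2 fun p => tendsto_pi_nhds.2 fun r => hL p r
  have hL0 (p r : ι) : 0 ≤ L p r := ge_of_tendsto' (hL p r) fun n => pow_apply_nonneg hQ0 n p r
  have hfix (m : ℕ) : Q ^ m * L = L := by
    refine tendsto_nhds_unique (tendsto_const_nhds.mul hlim) ?_
    exact (hlim.comp (tendsto_add_atTop_nat m)).congr fun n => by
      rw [Function.comp_apply, add_comm, pow_add]
  refine ⟨L, hlim, hL0, fun p r =>
    ⟨fun hpos => ⟨by_contra fun hr => ?_, ?_⟩, fun ⟨hr, hpr⟩ => ?_⟩⟩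
  · exact hpos.ne' (tendsto_nhds_unique (hL p r) (tendsto_pow_apply_of_not_isRecurrent hQ hr p))
  · obtain ⟨n, hn⟩ := ((hL p r).eventually (lt_mem_nhds hpos)).exists
    exact ((pow_apply_pos_iff_pathLen hQ0 n p r).1 hn).reflTransGen
  · obtain ⟨l, hl, hlpos⟩ := hr.exists_tendsto_pow_apply hQ hloop r
    have hrr : 0 < L r r := tendsto_nhds_unique hl (hL r r) ▸ hlpos .refl
    obtain ⟨m, hm⟩ := reflTransGen_iff_exists_pathLen.1 hpr
    rw [← hfix m]
    exact (mul_apply_pos_iff (pow_apply_nonneg hQ0 m) hL0 p r).2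
      ⟨r, (pow_apply_pos_iff_pathLen hQ0 m p r).2 hm, hrr⟩

theorem exists_tendsto_pow_pow_of_dvd {P : Matrix ι ι ℝ} (hP : P ∈ rowStochastic ℝ ι) {T : ℕ}
    (hT0 : 0 < T) (hT : ∀ k, 0 < k → k ≤ Fintype.card ι → k ∣ T) :
    ∃ L : Matrix ι ι ℝ, Tendsto ((P ^ T) ^ ·) atTop (𝓝 L) ∧ (∀ p r, 0 ≤ L p r) ∧
      ∀ p r, 0 < L p r ↔ IsRecurrent P.posRel r ∧ ReflTransGen (pathLen P.posRel T) p r := by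
  have hP0 : ∀ i j, 0 ≤ P i j := fun _ _ => nonneg_of_mem_rowStochastic hP
  have hE := exists_posRel_of_mem_rowStochastic hP
  have hrec (q : ι) := isRecurrent_pathLen_iff hE hT0 (q := q)
  obtain ⟨L, hlim, hL0, hLpos⟩ := exists_tendsto_pow (pow_mem hP T) fun q hq =>
    (pow_apply_pos_iff_pathLen hP0 T q q).2
      (((hrec q).1 (posRel_pow hP0 T ▸ hq)).pathLen_self hE hT)
  refine ⟨L, hlim, hL0, fun p r => ?_⟩
  rw [hLpos, posRel_pow hP0, hrec]

theorem vecMul_pow_mul_pos_iff {P L : Matrix ι ι ℝ} (hP : ∀ i j, 0 ≤ P i j)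
    (hL : ∀ i j, 0 ≤ L i j) {x : ι → ℝ} (hx : ∀ i, 0 ≤ x i) (k : ℕ) (q : ι) :
    0 < (x ᵥ* (P ^ k * L)) q ↔
      ∃ p, 0 < x p ∧ ∃ s, pathLen P.posRel k p s ∧ 0 < L s q := by
  have hPk := pow_apply_nonneg hP k
  have hPkL (i j : ι) : 0 ≤ (P ^ k * L) i j := by
    rw [mul_apply]; exact Finset.sum_nonneg fun u _ => mul_nonneg (hPk i u) (hL u j)
  simp only [vecMul_pos_iff hx hPkL, mul_apply_pos_iff hPk hL, pow_apply_pos_iff_pathLen hP]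

end Matrix

open Matrix in
/-- Structure of the limit distributions of a finite Markov chain: there is a period `T`
(dividing `lcm(1, …, d)`) and limit distributions `π^(0), …, π^(T−1)`, with
`I·P^k·(P^T)^n → π^(k)`, and `π^(k)(q) ≠ 0` iff `q` lies in a bottom SCC and is reachable
from the support of `I` by a path of length `k + T·ℓ` for some `ℓ ≤ d`. -/
theorem stmt5 (d : ℕ) (P : Matrix (Fin d) (Fin d) ℝ)
    (hP0 : ∀ i j, 0 ≤ P i j ∧ P i j ≤ 1) (hP1 : ∀ i, ∑ j, P i j = 1)
    (I : Fin d → ℝ) (hI0 : ∀ i, 0 ≤ I i ∧ I i ≤ 1) (hI1 : ∑ i, I i = 1) :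
    ∃ T : ℕ, 0 < T ∧ T ∣ (Finset.Icc 1 d).lcm id ∧
      ∃ pi : ℕ → Fin d → ℝ,
        ∀ k < T,
          (∀ q, 0 ≤ pi k q ∧ pi k q ≤ 1) ∧
          Filter.Tendsto (fun n : ℕ => Matrix.vecMul I (P ^ k * (P ^ T) ^ n))
            Filter.atTop (nhds (pi k)) ∧
          (∀ q : Fin d, pi k q ≠ 0 ↔
            ((∀ r, Relation.ReflTransGen (fun i j => 0 < P i j) q r →
                Relation.ReflTransGen (fun i j => 0 < P i j) r q) ∧
             ∃ p, 0 < I p ∧ ∃ l ≤ d, pathLen (fun i j => 0 < P i j) (k + T * l) p q)) := by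
  have hP : P ∈ rowStochastic ℝ (Fin d) :=
    mem_rowStochastic_iff_sum.2 ⟨(hP0 · · |>.1), hP1⟩
  set T := (Finset.Icc 1 d).lcm id
  have hT : ∀ k, 0 < k → k ≤ Fintype.card (Fin d) → k ∣ T := fun k hk hkd =>
    Finset.dvd_lcm (s := Finset.Icc 1 d) (f := id) (Finset.mem_Icc.2 ⟨hk, by simpa using hkd⟩)
  have hTpos : 0 < T := Nat.pos_of_ne_zero (Finset.lcm_eq_zero_iff.not.2 (by simp))
  obtain ⟨L, hlim, hL0, hLpos⟩ := exists_tendsto_pow_pow_of_dvd hP hTpos hT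
  refine ⟨T, hTpos, dvd_rfl, fun k => I ᵥ* (P ^ k * L), fun k _ => ?_⟩
  have hconv : Tendsto (fun n => I ᵥ* (P ^ k * (P ^ T) ^ n)) atTop (𝓝 (I ᵥ* (P ^ k * L))) :=
    ((continuous_const.matrix_vecMul continuous_id).tendsto _).comp (tendsto_const_nhds.mul hlim)
  have hbounds (q : Fin d) : (I ᵥ* (P ^ k * L)) q ∈ Set.Icc 0 1 :=
    isClosed_Icc.mem_of_tendsto (((continuous_apply q).tendsto _).comp hconv)
      (Eventually.of_forall fun n => vecMul_apply_mem_Icc (hI0 · |>.1) hI1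
        (mul_mem (pow_mem hP k) (pow_mem (pow_mem hP T) n)) q)
  refine ⟨hbounds, hconv, fun q => ?_⟩
  show _ ≠ 0 ↔
    IsRecurrent P.posRel q ∧ ∃ p, 0 < I p ∧ ∃ l ≤ d, pathLen P.posRel (k + T * l) p q
  rw [ne_comm, ← (hbounds q).1.lt_iff_ne,
    vecMul_pow_mul_pos_iff (hP0 · · |>.1) hL0 (hI0 · |>.1)]
  simp only [hLpos, ← exists_pathLen_add_mul_iff (Fintype.card_fin d).le]
  exact ⟨fun ⟨p, hp, s, hps, hq, hsq⟩ => ⟨hq, p, hp, s, hps, hsq⟩,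
    fun ⟨hq, p, hp, s, hps, hsq⟩ => ⟨p, hp, s, hps, hq, hsq⟩⟩
end

section
/- Let A be a finitely-ambiguous NFA and S ⊆ Δ a support with L(A) = L(A_S). If S is not a bad support, then A is positively resolvable with any resolver over S: for every resolver R whose support equals S there exists λ > 0 such that L((P_R)_{≥λ}) = L(A). -/
open scoped BigOperators

open NFA'

/-!
Let `b(w)` be the least number of `S`-nondeterministic transitions on an accepting run of `w`
in `A_S`. Under a resolver over `S`, runs leaving `S` have probability `0` and every
`S`-deterministic transition has probability `1`, so a run of `A_S` through `m` nondeterministic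
transitions has probability between `c ^ m` and `ρ ^ m`, where `0 < c` and `ρ < 1` are the extreme
probabilities of nondeterministic transitions. Every word has at most `k` accepting runs, so a
good resolver over `S` gives `P(w) ≤ k ρ ^ b(w)`, and its positive threshold bounds `b` on `L(A)`
by some `n`. Any other resolver over `S` then gives `P(w) ≥ c ^ b(w) ≥ c ^ n` on
`L(A) = L(A_S)`, and `P(w) = 0` off `L(A)`.
-/

namespace NFA'

variable {σ Q : Type} {A : NFA' σ Q} {S : Finset (Q × σ × Q)} {k : ℕ} {R : A.Resolver}

section Runs

variable {Δ Δ' : Finset (Q × σ × Q)} {q r : Q} {w : List σ} {ts : List (Q × σ × Q)}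

lemma IsRun.mono (h : Δ ⊆ Δ') (hr : IsRun Δ q w ts r) : IsRun Δ' q w ts r := by
  induction hr with
  | nil q => exact .nil q
  | cons ht _ ih => exact .cons (h ht) ih

lemma IsRun.mem_trans (hr : IsRun Δ q w ts r) : ∀ t ∈ ts, t ∈ Δ := by
  induction hr with
  | nil => simp
  | cons ht _ ih => exact List.forall_mem_cons.2 ⟨ht, ih⟩

lemma IsRun.of_forall_mem (hr : IsRun Δ q w ts r) (hmem : ∀ t ∈ ts, t ∈ Δ') :
    IsRun Δ' q w ts r := by
  induction hr with
  | nil q => exact .nil q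
  | cons _ _ ih =>
    rw [List.forall_mem_cons] at hmem
    exact .cons hmem.1 (ih hmem.2)

end Runs

lemma runProb_cons (f : Q × σ × Q → ℝ) (t : Q × σ × Q) (ts : List (Q × σ × Q)) :
    runProb f (t :: ts) = f t * runProb f ts :=
  List.prod_cons

lemma runProb_nonneg {f : Q × σ × Q → ℝ} (hf : ∀ t, 0 ≤ f t) (ts : List (Q × σ × Q)) :
    0 ≤ runProb f ts :=
  List.prod_nonneg fun _ hx => by
    obtain ⟨t, -, rfl⟩ := List.mem_map.1 hx
    exact hf t

lemma nondetCount_cons (S : Finset (Q × σ × Q)) (t : Q × σ × Q) (ts : List (Q × σ × Q)) :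
    nondetCount S (t :: ts) = {u | NondetIn S u}.indicator (fun _ => 1) t + nondetCount S ts :=
  List.sum_cons

lemma kAmbiguous.finite_setOf_accRun (hk : A.kAmbiguous k) (w : List σ) :
    {ts | A.AccRun w ts}.Finite :=
  Set.encard_ne_top_iff.1 ((hk w).trans_lt (ENat.natCast_lt_top k)).ne

lemma kAmbiguous.accProb_eq_sum (hk : A.kAmbiguous k) (f : Q × σ × Q → ℝ) (w : List σ) :
    A.accProb f w = ∑ ts ∈ (hk.finite_setOf_accRun w).toFinset, runProb f ts := by
  rw [accProb, ← finsum_mem_coe_finset, Set.Finite.coe_toFinset]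

lemma kAmbiguous.card_toFinset_le (hk : A.kAmbiguous k) (w : List σ) :
    (hk.finite_setOf_accRun w).toFinset.card ≤ k := by
  have := hk w
  rwa [← Set.Finite.coe_toFinset (hk.finite_setOf_accRun w), Set.encard_coe_eq_coe_finsetCard,
    Nat.cast_le] at this

lemma kAmbiguous.runProb_le_accProb (hk : A.kAmbiguous k) {f : Q × σ × Q → ℝ}
    (hf : ∀ t, 0 ≤ f t) {w : List σ} {ts : List (Q × σ × Q)} (hts : A.AccRun w ts) :
    runProb f ts ≤ A.accProb f w := by
  rw [hk.accProb_eq_sum]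
  exact Finset.single_le_sum (fun ts _ => runProb_nonneg hf ts)
    ((Set.Finite.mem_toFinset _).2 hts)

lemma mem_lang_of_accProb_ne_zero {f : Q × σ × Q → ℝ} {w : List σ}
    (h : A.accProb f w ≠ 0) : w ∈ A.lang := by
  by_contra hw
  have hempty : {ts | A.AccRun w ts} = ∅ :=
    Set.eq_empty_of_forall_notMem fun ts hts => hw ⟨ts, hts⟩
  exact h (by rw [accProb, hempty, finsum_mem_empty])

lemma minNondet_le_nondetCount {w : List σ} {ts : List (Q × σ × Q)}
    (hts : (A.restrict S).AccRun w ts) :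
    A.minNondet S w ≤ nondetCount S ts :=
  Nat.sInf_le ⟨ts, hts, rfl⟩

lemma exists_accRun_nondetCount_eq_minNondet {w : List σ} (hw : w ∈ (A.restrict S).lang) :
    ∃ ts, (A.restrict S).AccRun w ts ∧ nondetCount S ts = A.minNondet S w := by
  obtain ⟨ts, hts⟩ := hw
  exact Nat.sInf_mem (s := {m | ∃ ts, (A.restrict S).AccRun w ts ∧ nondetCount S ts = m})
    ⟨_, ts, hts, rfl⟩

/-- `R` is a resolver over `S`. -/
def Resolver.HasSupport (R : A.Resolver) (S : Finset (Q × σ × Q)) : Prop :=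
  ∀ t, R.r t ≠ 0 ↔ t ∈ S

namespace Resolver.HasSupport

open scoped Classical

lemma subset_trans (hR : R.HasSupport S) : S ⊆ A.trans :=
  fun t ht => R.supp t ((hR t).2 ht)

lemma pos (hR : R.HasSupport S) {t : Q × σ × Q} (ht : t ∈ S) : 0 < R.r t :=
  (R.nonneg t).lt_of_ne' ((hR t).2 ht)

lemma eq_zero (hR : R.HasSupport S) {t : Q × σ × Q} (ht : t ∉ S) : R.r t = 0 :=
  not_not.1 fun h => ht ((hR t).1 h)

lemma sum_filter_eq_one (hR : R.HasSupport S) {t : Q × σ × Q} (ht : t ∈ S) :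
    ∑ u ∈ S.filter (fun u => u.1 = t.1 ∧ u.2.1 = t.2.1), R.r u = 1 := by
  have h := R.sum_one t.1 t.2.1 ⟨t.2.2, hR.subset_trans ht⟩
  rwa [← Finset.sum_subset hR.subset_trans fun u _ hu => by
      simp [hR.eq_zero hu], Finset.sum_indicator_eq_sum_filter] at h

lemma eq_one_of_not_nondetIn (hR : R.HasSupport S) {t : Q × σ × Q} (ht : t ∈ S)
    (hdet : ¬ NondetIn S t) : R.r t = 1 := by
  have hsingle : S.filter (fun u => u.1 = t.1 ∧ u.2.1 = t.2.1) = {t} := by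
    ext ⟨p, a, q⟩
    simp only [Finset.mem_filter, Finset.mem_singleton]
    constructor
    · rintro ⟨hu, rfl, rfl⟩
      by_contra hne
      exact hdet ⟨ht, q, fun h => hne (by simp [h]), hu⟩
    · rintro rfl
      exact ⟨ht, rfl, rfl⟩
  simpa [hsingle] using hR.sum_filter_eq_one ht

lemma lt_one_of_nondetIn (hR : R.HasSupport S) {t : Q × σ × Q} (ht : NondetIn S t) :
    R.r t < 1 := by
  obtain ⟨htS, q', hq', hq'S⟩ := ht
  set t' : Q × σ × Q := (t.1, t.2.1, q')
  have hne : t ≠ t' := fun h => hq' (by rw [h])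
  have hpair : {t, t'} ⊆ S.filter (fun u => u.1 = t.1 ∧ u.2.1 = t.2.1) := by
    simp [Finset.insert_subset_iff, htS, hq'S, t']
  have hle := Finset.sum_le_sum_of_subset_of_nonneg hpair fun u _ _ => R.nonneg u
  rw [Finset.sum_pair hne, hR.sum_filter_eq_one htS] at hle
  linarith [hR.pos hq'S]

lemma exists_le_lt_one (hR : R.HasSupport S) :
    ∃ ρ, 0 ≤ ρ ∧ ρ < 1 ∧ ∀ t, NondetIn S t → R.r t ≤ ρ := by
  rcases (S.filter (NondetIn S)).eq_empty_or_nonempty with hN | hN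
  · exact ⟨0, le_rfl, one_pos,
      fun t ht => absurd (Finset.mem_filter.2 ⟨ht.1, ht⟩) (by simp [hN])⟩
  · obtain ⟨t₀, ht₀, hmax⟩ := Finset.exists_max_image _ R.r hN
    exact ⟨R.r t₀, R.nonneg t₀, hR.lt_one_of_nondetIn (Finset.mem_filter.1 ht₀).2,
      fun t ht => hmax t (Finset.mem_filter.2 ⟨ht.1, ht⟩)⟩

lemma exists_pos_le (hR : R.HasSupport S) :
    ∃ c, 0 < c ∧ c ≤ 1 ∧ ∀ t, NondetIn S t → c ≤ R.r t := by
  rcases (S.filter (NondetIn S)).eq_empty_or_nonempty with hN | hN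
  · exact ⟨1, one_pos, le_rfl,
      fun t ht => absurd (Finset.mem_filter.2 ⟨ht.1, ht⟩) (by simp [hN])⟩
  · obtain ⟨t₀, ht₀, hmin⟩ := Finset.exists_min_image _ R.r hN
    exact ⟨R.r t₀, hR.pos (Finset.mem_filter.1 ht₀).1, R.le_one t₀,
      fun t ht => hmin t (Finset.mem_filter.2 ⟨ht.1, ht⟩)⟩

lemma runProb_le_pow_nondetCount (hR : R.HasSupport S) {ρ : ℝ} (hρ : 0 ≤ ρ)
    (hle : ∀ t, NondetIn S t → R.r t ≤ ρ) {ts : List (Q × σ × Q)} (hts : ∀ t ∈ ts, t ∈ S) :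
    runProb R.r ts ≤ ρ ^ nondetCount S ts := by
  induction ts with
  | nil => simp [runProb, nondetCount]
  | cons t ts ih =>
    rw [List.forall_mem_cons] at hts
    have ih := ih hts.2
    rw [nondetCount_cons, runProb_cons]
    by_cases hnd : NondetIn S t
    · rw [Set.indicator_of_mem (s := {u | NondetIn S u}) hnd, pow_add, pow_one]
      exact mul_le_mul (hle t hnd) ih (runProb_nonneg R.nonneg ts) hρ
    · rw [Set.indicator_of_notMem (s := {u | NondetIn S u}) hnd,
        hR.eq_one_of_not_nondetIn hts.1 hnd, zero_add, one_mul]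
      exact ih

lemma pow_nondetCount_le_runProb (hR : R.HasSupport S) {c : ℝ} (hc : 0 ≤ c)
    (hle : ∀ t, NondetIn S t → c ≤ R.r t) {ts : List (Q × σ × Q)} (hts : ∀ t ∈ ts, t ∈ S) :
    c ^ nondetCount S ts ≤ runProb R.r ts := by
  induction ts with
  | nil => simp [runProb, nondetCount]
  | cons t ts ih =>
    rw [List.forall_mem_cons] at hts
    have ih := ih hts.2
    rw [nondetCount_cons, runProb_cons]
    by_cases hnd : NondetIn S t
    · rw [Set.indicator_of_mem (s := {u | NondetIn S u}) hnd, pow_add, pow_one]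
      exact mul_le_mul (hle t hnd) ih (pow_nonneg hc _) (R.nonneg t)
    · rw [Set.indicator_of_notMem (s := {u | NondetIn S u}) hnd,
        hR.eq_one_of_not_nondetIn hts.1 hnd, zero_add, one_mul]
      exact ih

lemma runProb_le_pow_minNondet (hR : R.HasSupport S) {ρ : ℝ} (hρ₀ : 0 ≤ ρ) (hρ₁ : ρ ≤ 1)
    (hle : ∀ t, NondetIn S t → R.r t ≤ ρ) {w : List σ} {ts : List (Q × σ × Q)}
    (hts : A.AccRun w ts) : runProb R.r ts ≤ ρ ^ A.minNondet S w := by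
  obtain ⟨r, hr, hrun⟩ := hts
  by_cases hS : ∀ t ∈ ts, t ∈ S
  · calc runProb R.r ts ≤ ρ ^ nondetCount S ts := hR.runProb_le_pow_nondetCount hρ₀ hle hS
      _ ≤ ρ ^ A.minNondet S w :=
        pow_le_pow_of_le_one hρ₀ hρ₁ (minNondet_le_nondetCount ⟨r, hr, hrun.of_forall_mem hS⟩)
  · push Not at hS
    obtain ⟨t, ht, htS⟩ := hS
    have hzero : runProb R.r ts = 0 :=
      List.prod_eq_zero (hR.eq_zero htS ▸ List.mem_map_of_mem ht)
    exact hzero ▸ pow_nonneg hρ₀ _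

end Resolver.HasSupport

lemma accProb_le_mul_pow_minNondet (hk : A.kAmbiguous k) (hR : R.HasSupport S) {ρ : ℝ}
    (hρ₀ : 0 ≤ ρ) (hρ₁ : ρ ≤ 1) (hle : ∀ t, NondetIn S t → R.r t ≤ ρ) (w : List σ) :
    A.accProb R.r w ≤ k * ρ ^ A.minNondet S w := by
  rw [hk.accProb_eq_sum]
  calc _ ≤ (hk.finite_setOf_accRun w).toFinset.card • ρ ^ A.minNondet S w :=
        Finset.sum_le_card_nsmul _ _ _ fun ts hts =>
          hR.runProb_le_pow_minNondet hρ₀ hρ₁ hle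
            ((hk.finite_setOf_accRun w).mem_toFinset.1 hts)
    _ ≤ k * ρ ^ A.minNondet S w := by
        rw [nsmul_eq_mul]
        gcongr
        exact_mod_cast hk.card_toFinset_le w

lemma exists_minNondet_le_of_threshold (hk : A.kAmbiguous k) (hR : R.HasSupport S) {lam : ℝ}
    (hlam : 0 < lam) (hres : {w | lam ≤ A.accProb R.r w} = A.lang) :
    ∃ n, ∀ w ∈ A.lang, A.minNondet S w ≤ n := by
  obtain ⟨ρ, hρ₀, hρ₁, hle⟩ := hR.exists_le_lt_one
  have hlim : Filter.Tendsto (fun n : ℕ => (k : ℝ) * ρ ^ n) Filter.atTop (nhds 0) := by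
    simpa using (tendsto_pow_atTop_nhds_zero_of_lt_one hρ₀ hρ₁).const_mul (k : ℝ)
  obtain ⟨n, hn⟩ := (hlim.eventually (gt_mem_nhds hlam)).exists
  refine ⟨n, fun w hw => not_lt.1 fun hlt => ?_⟩
  have := calc
    lam ≤ A.accProb R.r w := (Set.ext_iff.1 hres w).2 hw
    _ ≤ k * ρ ^ A.minNondet S w := accProb_le_mul_pow_minNondet hk hR hρ₀ hρ₁.le hle w
    _ ≤ k * ρ ^ n := by gcongr k * ?_; exact pow_le_pow_of_le_one hρ₀ hρ₁.le hlt.le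
  linarith

lemma pow_minNondet_le_accProb (hk : A.kAmbiguous k) (hR : R.HasSupport S) {c : ℝ}
    (hc : 0 ≤ c) (hle : ∀ t, NondetIn S t → c ≤ R.r t) {w : List σ}
    (hw : w ∈ (A.restrict S).lang) : c ^ A.minNondet S w ≤ A.accProb R.r w := by
  obtain ⟨ts, ⟨r, hr, hrun⟩, hcount⟩ := exists_accRun_nondetCount_eq_minNondet hw
  calc c ^ A.minNondet S w = c ^ nondetCount S ts := by rw [hcount]
    _ ≤ runProb R.r ts := hR.pow_nondetCount_le_runProb hc hle hrun.mem_trans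
    _ ≤ A.accProb R.r w :=
      hk.runProb_le_accProb R.nonneg ⟨r, hr, hrun.mono hR.subset_trans⟩

end NFA'

theorem stmt8_general {σ Q : Type} (A : NFA' σ Q) (hfa : A.FinitelyAmbiguous)
    (S : Finset (Q × σ × Q)) (hlang : A.lang = (A.restrict S).lang)
    (hgood : ¬ A.BadSupport S) :
    ∀ R : A.Resolver, (∀ t, R.r t ≠ 0 ↔ t ∈ S) →
      ∃ lam : ℝ, 0 < lam ∧ {w | lam ≤ A.accProb R.r w} = A.lang := by
  intro R (hR : R.HasSupport S)
  obtain ⟨k, -, hk⟩ := hfa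
  obtain ⟨R₀, hR₀, lam₀, hlam₀, hres₀⟩ : ∃ R₀ : A.Resolver, R₀.HasSupport S ∧
      ∃ lam₀ > 0, {w | lam₀ ≤ A.accProb R₀.r w} = A.lang := by
    simpa [BadSupport, Resolver.HasSupport] using hgood
  obtain ⟨n, hn⟩ := exists_minNondet_le_of_threshold hk hR₀ hlam₀ hres₀
  obtain ⟨c, hc₀, hc₁, hle⟩ := hR.exists_pos_le
  refine ⟨c ^ n, pow_pos hc₀ n, Set.ext fun w => ⟨fun hw => ?_, fun hw => ?_⟩⟩
  · exact mem_lang_of_accProb_ne_zero ((pow_pos hc₀ n).trans_le hw).ne'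
  · calc c ^ n ≤ c ^ A.minNondet S w := pow_le_pow_of_le_one hc₀.le hc₁ (hn w hw)
      _ ≤ A.accProb R.r w := pow_minNondet_le_accProb hk hR hc₀.le hle (hlang ▸ hw)

/-- If `S` is not a bad support of a finitely-ambiguous NFA `A` (with
`L(A) = L(A_S)`), then every resolver whose support is exactly `S` positively
resolves `A`. -/
theorem stmt8 {σ Q : Type} (A : NFA' σ Q) (hfa : A.FinitelyAmbiguous)
    (S : Finset (Q × σ × Q)) (hS : S ⊆ A.trans)
    (hlang : A.lang = (A.restrict S).lang)
    (hgood : ¬ A.BadSupport S) :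
    ∀ R : A.Resolver, (∀ t, R.r t ≠ 0 ↔ t ∈ S) →
      ∃ lam : ℝ, 0 < lam ∧ {w | lam ≤ A.accProb R.r w} = A.lang :=
  stmt8_general A hfa S hlang hgood
end

section
/- For every trim unambiguous NFA A that is positively resolvable, there exists a positive integer N such that for all λ ∈ (0,1]: A is λ-resolvable if and only if λ ≤ 1/N. In particular, A is (1/N)-resolvable but not (1/N + ε)-resolvable for any ε > 0. -/
open scoped BigOperators

open NFA'

namespace Stmt10Aux

open NFA'

variable {σ Q : Type}

open scoped Classical

/-! ### Basic run lemmas -/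

theorem isRun_append {Δ : Finset (Q × σ × Q)} {q r s : Q} {u v : List σ}
    {ts ss : List (Q × σ × Q)} (h1 : IsRun Δ q u ts r) (h2 : IsRun Δ r v ss s) :
    IsRun Δ q (u ++ v) (ts ++ ss) s := by
  induction h1 with
  | nil q => simpa using h2
  | cons hmem _ ih => exact IsRun.cons hmem (ih h2)

theorem isRun_mem {Δ : Finset (Q × σ × Q)} {q r : Q} {w : List σ}
    {ts : List (Q × σ × Q)} (h : IsRun Δ q w ts r) {t : Q × σ × Q} (ht : t ∈ ts) :
    t ∈ Δ := by
  induction h with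
  | nil => simp at ht
  | cons hmem _ ih =>
    rcases List.mem_cons.mp ht with h | h
    · subst h; exact hmem
    · exact ih h

theorem isRun_single {Δ : Finset (Q × σ × Q)} {q q' : Q} {a : σ}
    (h : (q, a, q') ∈ Δ) : IsRun Δ q [a] [(q, a, q')] q' :=
  IsRun.cons h (IsRun.nil q')

/-- split a run at an occurrence of a transition: suffix run from the target. -/
theorem isRun_split {Δ : Finset (Q × σ × Q)} {q r : Q} {w : List σ}
    {ts : List (Q × σ × Q)} (h : IsRun Δ q w ts r) {t : Q × σ × Q} (ht : t ∈ ts) :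
    ∃ w' ts', IsRun Δ t.2.2 w' ts' r ∧ List.Sublist ts' ts := by
  induction h with
  | nil => simp at ht
  | cons hmem hrun ih =>
    rcases List.mem_cons.mp ht with h | h
    · subst h
      exact ⟨_, _, hrun, List.sublist_cons_self _ _⟩
    · obtain ⟨w', ts', h1, h2⟩ := ih h
      exact ⟨w', ts', h1, h2.trans (List.sublist_cons_self _ _)⟩

/-! ### runProb lemmas -/

theorem runProb_nil (f : Q × σ × Q → ℝ) : runProb f ([] : List (Q × σ × Q)) = 1 := rfl

theorem runProb_cons (f : Q × σ × Q → ℝ) (t : Q × σ × Q) (ts : List (Q × σ × Q)) :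
    runProb f (t :: ts) = f t * runProb f ts := by
  simp [runProb]

theorem runProb_append (f : Q × σ × Q → ℝ) (ts ss : List (Q × σ × Q)) :
    runProb f (ts ++ ss) = runProb f ts * runProb f ss := by
  simp [runProb]

theorem runProb_nonneg {f : Q × σ × Q → ℝ} {ts : List (Q × σ × Q)}
    (h : ∀ t ∈ ts, 0 ≤ f t) : 0 ≤ runProb f ts := by
  induction ts with
  | nil => norm_num [runProb_nil]
  | cons t ts ih =>
    rw [runProb_cons]
    exact mul_nonneg (h t (by simp)) (ih fun s hs => h s (by simp [hs]))

theorem runProb_le_one {f : Q × σ × Q → ℝ} {ts : List (Q × σ × Q)}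
    (h : ∀ t ∈ ts, 0 ≤ f t ∧ f t ≤ 1) : runProb f ts ≤ 1 := by
  induction ts with
  | nil => norm_num [runProb_nil]
  | cons t ts ih =>
    rw [runProb_cons]
    have h1 := h t (by simp)
    have h2 : runProb f ts ≤ 1 := ih fun s hs => h s (by simp [hs])
    have h3 : 0 ≤ runProb f ts := runProb_nonneg fun s hs => (h s (by simp [hs])).1
    calc f t * runProb f ts ≤ 1 * 1 := by
          exact mul_le_mul h1.2 h2 h3 zero_le_one
      _ = 1 := by ring

theorem runProb_le_factor {f : Q × σ × Q → ℝ} {ts : List (Q × σ × Q)}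
    (h : ∀ t ∈ ts, 0 ≤ f t ∧ f t ≤ 1) {t : Q × σ × Q} (ht : t ∈ ts) :
    runProb f ts ≤ f t := by
  induction ts with
  | nil => simp at ht
  | cons s ts ih =>
    rw [runProb_cons]
    have hs := h s (by simp)
    have hnn : 0 ≤ runProb f ts := runProb_nonneg fun u hu => (h u (by simp [hu])).1
    have hle : runProb f ts ≤ 1 := runProb_le_one fun u hu => h u (by simp [hu])
    rcases List.mem_cons.mp ht with h' | h'
    · subst h'
      calc f t * runProb f ts ≤ f t * 1 := by
            exact mul_le_mul_of_nonneg_left hle hs.1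
        _ = f t := by ring
    · have := ih (fun u hu => h u (by simp [hu])) h'
      calc f s * runProb f ts ≤ 1 * f t := by
            exact mul_le_mul hs.2 this hnn zero_le_one
        _ = f t := by ring

/-! ### nondetCount lemmas -/

theorem nondetCount_nil (S : Finset (Q × σ × Q)) : nondetCount S [] = 0 := rfl

theorem nondetCount_cons (S : Finset (Q × σ × Q)) (t : Q × σ × Q)
    (ts : List (Q × σ × Q)) :
    nondetCount S (t :: ts)
      = (if NondetIn S t then 1 else 0) + nondetCount S ts := by
  simp only [nondetCount, List.map_cons, List.sum_cons]
  by_cases h : NondetIn S t <;> simp [Set.indicator_apply, h]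

theorem nondetCount_append (S : Finset (Q × σ × Q)) (ts ss : List (Q × σ × Q)) :
    nondetCount S (ts ++ ss) = nondetCount S ts + nondetCount S ss := by
  simp [nondetCount]

theorem nondetCount_le_of_sublist {S : Finset (Q × σ × Q)}
    {ts ss : List (Q × σ × Q)} (h : List.Sublist ts ss) :
    nondetCount S ts ≤ nondetCount S ss := by
  exact List.Sublist.sum_le_sum (h.map _) (fun _ _ => Nat.zero_le _)

theorem runProb_le_pow {f : Q × σ × Q → ℝ} {ts : List (Q × σ × Q)} {S : Finset (Q × σ × Q)}
    {c : ℝ} (hc0 : 0 ≤ c) (hc1 : c ≤ 1)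
    (h : ∀ t ∈ ts, 0 ≤ f t ∧ f t ≤ 1)
    (hm : ∀ t ∈ ts, NondetIn S t → f t ≤ c) :
    runProb f ts ≤ c ^ nondetCount S ts := by
  induction ts with
  | nil => norm_num [runProb_nil, nondetCount_nil]
  | cons t ts ih =>
    rw [runProb_cons, nondetCount_cons]
    have h1 := h t (by simp)
    have hnn : 0 ≤ runProb f ts := runProb_nonneg fun u hu => (h u (by simp [hu])).1
    have ihts := ih (fun u hu => h u (by simp [hu])) (fun u hu => hm u (by simp [hu]))
    have hpow : (0:ℝ) ≤ c ^ nondetCount S ts := pow_nonneg hc0 _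
    by_cases hn : NondetIn S t
    · rw [if_pos hn, pow_add, pow_one]
      exact mul_le_mul (hm t (by simp) hn) ihts hnn hc0
    · rw [if_neg hn]
      simpa using mul_le_mul h1.2 ihts hnn zero_le_one

end Stmt10Aux
namespace Stmt10Aux

open NFA'

variable {σ Q : Type}

/-! ### accProb under unambiguity -/

theorem accRun_unique {A : NFA' σ Q} (hunamb : A.kAmbiguous 1) {w : List σ}
    {ts ts' : List (Q × σ × Q)} (h : A.AccRun w ts) (h' : A.AccRun w ts') : ts = ts' := by
  have := hunamb w
  rw [show ((1:ℕ):ℕ∞) = 1 by rfl, Set.encard_le_one_iff] at this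
  exact this ts ts' h h'

theorem accProb_eq_runProb {A : NFA' σ Q} (hunamb : A.kAmbiguous 1) (f : Q × σ × Q → ℝ)
    {w : List σ} {ts : List (Q × σ × Q)} (h : A.AccRun w ts) :
    A.accProb f w = runProb f ts := by
  have hset : {ts' | A.AccRun w ts'} = {ts} := by
    apply Set.eq_singleton_iff_unique_mem.mpr
    exact ⟨h, fun ts' h' => accRun_unique hunamb h' h⟩
  rw [accProb, hset, finsum_mem_singleton]

theorem accProb_of_not_lang {A : NFA' σ Q} (f : Q × σ × Q → ℝ)
    {w : List σ} (hw : w ∉ A.lang) : A.accProb f w = 0 := by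
  have hset : {ts' | A.AccRun w ts'} = (∅ : Set (List (Q × σ × Q))) := by
    ext ts'; simp only [Set.mem_setOf_eq, Set.mem_empty_iff_false, iff_false]
    exact fun h => hw ⟨ts', h⟩
  rw [accProb, hset, finsum_mem_empty]

/-! ### resolver slice sums -/

theorem resolver_sum_le {A : NFA' σ Q} (R : A.Resolver) {p : Q} {a : σ}
    (hpa : ∃ q, (p, a, q) ∈ A.trans)
    {g : Finset (Q × σ × Q)} (hg : g ⊆ A.trans)
    (hslice : ∀ t ∈ g, t.1 = p ∧ t.2.1 = a) :
    ∑ t ∈ g, R.r t ≤ 1 := by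
  classical
  have h1 := R.sum_one p a hpa
  have h2 : ∑ t ∈ A.trans, {t : Q × σ × Q | t.1 = p ∧ t.2.1 = a}.indicator R.r t
      = ∑ t ∈ A.trans.filter (fun t => t.1 = p ∧ t.2.1 = a), R.r t := by
    rw [Finset.sum_filter]
    apply Finset.sum_congr rfl
    intro t _
    by_cases h : t.1 = p ∧ t.2.1 = a <;> simp [Set.indicator_apply, h]
  rw [h2] at h1
  rw [← h1]
  apply Finset.sum_le_sum_of_subset_of_nonneg
  · intro t ht
    exact Finset.mem_filter.mpr ⟨hg ht, hslice t ht⟩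
  · intro t _ _
    exact R.nonneg t

/-! ### the set `U` of transitions used by accepting runs -/

open scoped Classical in
noncomputable def UA (A : NFA' σ Q) : Finset (Q × σ × Q) :=
  A.trans.filter (fun t => ∃ w ts, A.AccRun w ts ∧ t ∈ ts)

theorem mem_UA {A : NFA' σ Q} {t : Q × σ × Q} :
    t ∈ UA A ↔ t ∈ A.trans ∧ ∃ w ts, A.AccRun w ts ∧ t ∈ ts := by
  classical
  simp [UA]

theorem UA_subset {A : NFA' σ Q} : UA A ⊆ A.trans := fun t ht => (mem_UA.mp ht).1

theorem mem_UA_of_accRun {A : NFA' σ Q} {w : List σ} {ts : List (Q × σ × Q)}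
    (h : A.AccRun w ts) {t : Q × σ × Q} (ht : t ∈ ts) : t ∈ UA A := by
  obtain ⟨r, hr, hrun⟩ := h
  exact mem_UA.mpr ⟨isRun_mem hrun ht, w, ts, ⟨r, hr, hrun⟩, ht⟩

/-! ### deterministic reachability, `Next`, groups and the value function `Nf` -/

def detStep (S : Finset (Q × σ × Q)) (q q' : Q) : Prop :=
  ∃ a, (q, a, q') ∈ S ∧ ¬ NondetIn S (q, a, q')

def DetReach (S : Finset (Q × σ × Q)) : Q → Q → Prop :=
  Relation.ReflTransGen (detStep S)

open scoped Classical in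
noncomputable def NextS (S : Finset (Q × σ × Q)) (q : Q) : Finset (Q × σ × Q) :=
  S.filter (fun t => NondetIn S t ∧ DetReach S q t.1)

theorem mem_NextS {S : Finset (Q × σ × Q)} {q : Q} {t : Q × σ × Q} :
    t ∈ NextS S q ↔ t ∈ S ∧ NondetIn S t ∧ DetReach S q t.1 := by
  classical
  simp [NextS]

open scoped Classical in
noncomputable def groupS (S : Finset (Q × σ × Q)) (t : Q × σ × Q) :
    Finset (Q × σ × Q) :=
  S.filter (fun t' => t'.1 = t.1 ∧ t'.2.1 = t.2.1)

theorem mem_groupS {S : Finset (Q × σ × Q)} {t t' : Q × σ × Q} :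
    t' ∈ groupS S t ↔ t' ∈ S ∧ t'.1 = t.1 ∧ t'.2.1 = t.2.1 := by
  classical
  simp [groupS]

theorem self_mem_groupS {S : Finset (Q × σ × Q)} {t : Q × σ × Q} (h : t ∈ S) :
    t ∈ groupS S t := mem_groupS.mpr ⟨h, rfl, rfl⟩

theorem groupS_congr {S : Finset (Q × σ × Q)} {t t' : Q × σ × Q}
    (h : t' ∈ groupS S t) : groupS S t' = groupS S t := by
  obtain ⟨_, h1, h2⟩ := mem_groupS.mp h
  ext u
  rw [mem_groupS, mem_groupS, h1, h2]

theorem nondetIn_of_groupS {S : Finset (Q × σ × Q)} {t t' : Q × σ × Q}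
    (hn : NondetIn S t) (h : t' ∈ groupS S t) : NondetIn S t' := by
  obtain ⟨ht'S, h1, h2⟩ := mem_groupS.mp h
  obtain ⟨htS, q', hq', hmem⟩ := hn
  by_cases he : t'.2.2 = t.2.2
  · refine ⟨ht'S, q', ?_, ?_⟩
    · rw [he]; exact hq'
    · rw [h1, h2]; exact hmem
  · refine ⟨ht'S, t.2.2, fun hc => he hc.symm, ?_⟩
    rw [h1, h2]
    exact (show (t.1, t.2.1, t.2.2) = t by rfl) ▸ htS

noncomputable def Nf (S : Finset (Q × σ × Q)) : ℕ → Q → ℕ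
  | 0, _ => 1
  | k+1, q =>
      if (NextS S q).Nonempty then
        (NextS S q).sup (fun t => ∑ t' ∈ groupS S t, Nf S k t'.2.2)
      else 1

noncomputable def Mf (S : Finset (Q × σ × Q)) (k : ℕ) (t : Q × σ × Q) : ℕ :=
  ∑ t' ∈ groupS S t, Nf S k t'.2.2

theorem Nf_succ (S : Finset (Q × σ × Q)) (k : ℕ) (q : Q) :
    Nf S (k+1) q = if (NextS S q).Nonempty then (NextS S q).sup (Mf S k) else 1 := rfl


theorem le_Mf {S : Finset (Q × σ × Q)} {k : ℕ} {t t' : Q × σ × Q}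
    (h : t' ∈ groupS S t) : Nf S k t'.2.2 ≤ Mf S k t := by
  unfold Mf
  exact Finset.single_le_sum (f := fun u => Nf S k u.2.2) (fun _ _ => Nat.zero_le _) h

theorem one_le_Nf (S : Finset (Q × σ × Q)) : ∀ k q, 1 ≤ Nf S k q := by
  intro k
  induction k with
  | zero => intro q; exact le_refl 1
  | succ k ih =>
    intro q
    rw [Nf_succ]
    by_cases h : (NextS S q).Nonempty
    · rw [if_pos h]
      obtain ⟨t, ht⟩ := h
      have htS : t ∈ S := (mem_NextS.mp ht).1
      calc (1:ℕ) ≤ Nf S k t.2.2 := ih t.2.2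
        _ ≤ Mf S k t := le_Mf (self_mem_groupS htS)
        _ ≤ (NextS S q).sup (Mf S k) := Finset.le_sup ht
    · rw [if_neg h]

theorem Nf_of_empty {S : Finset (Q × σ × Q)} {q : Q}
    (h : ¬ (NextS S q).Nonempty) : ∀ n, Nf S n q = 1 := by
  intro n
  cases n with
  | zero => rfl
  | succ n => rw [Nf_succ, if_neg h]

theorem NextS_mono {S : Finset (Q × σ × Q)} {q q' : Q} (h : DetReach S q q') :
    NextS S q' ⊆ NextS S q := by
  intro t ht
  obtain ⟨h1, h2, h3⟩ := mem_NextS.mp ht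
  exact mem_NextS.mpr ⟨h1, h2, h.trans h3⟩

theorem Nf_le_of_detReach {S : Finset (Q × σ × Q)} {q q' : Q}
    (h : DetReach S q q') (k : ℕ) : Nf S k q' ≤ Nf S k q := by
  cases k with
  | zero => exact le_refl 1
  | succ k =>
    rw [Nf_succ, Nf_succ]
    by_cases h' : (NextS S q').Nonempty
    · rw [if_pos h', if_pos (h'.mono (NextS_mono h))]
      exact Finset.sup_mono (NextS_mono h)
    · rw [if_neg h']
      by_cases h'' : (NextS S q).Nonempty
      · rw [if_pos h'']
        obtain ⟨t, ht⟩ := h''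
        have htS : t ∈ S := (mem_NextS.mp ht).1
        calc (1:ℕ) ≤ Mf S k t := le_trans (one_le_Nf S k t.2.2) (le_Mf (self_mem_groupS htS))
          _ ≤ _ := Finset.le_sup ht
      · rw [if_neg h'']

end Stmt10Aux
namespace Stmt10Aux

open NFA'

variable {σ Q : Type}

/-- reachability from the initial state -/
def Rel (A : NFA' σ Q) (q : Q) : Prop :=
  ∃ w ts, IsRun A.trans A.init w ts q

/-- existence of an accepting run from `q` -/
def Coacc (A : NFA' σ Q) (q : Q) : Prop :=
  ∃ w ts r, r ∈ A.accept ∧ IsRun A.trans q w ts r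

/-- every accepting run from `q` has at most `k` `U`-nondeterministic transitions -/
def Cobound (A : NFA' σ Q) (q : Q) (k : ℕ) : Prop :=
  ∀ w ts r, r ∈ A.accept → IsRun A.trans q w ts r → nondetCount (UA A) ts ≤ k

theorem rel_init (A : NFA' σ Q) : Rel A A.init := ⟨[], [], IsRun.nil _⟩

theorem rel_step {A : NFA' σ Q} {q q' : Q} {a : σ} (h : Rel A q)
    (ht : (q, a, q') ∈ A.trans) : Rel A q' := by
  obtain ⟨w, ts, hrun⟩ := h
  exact ⟨w ++ [a], ts ++ [(q, a, q')], isRun_append hrun (isRun_single ht)⟩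

theorem detReach_run {A : NFA' σ Q} {q p : Q} (h : DetReach (UA A) q p) :
    ∃ w ts, IsRun A.trans q w ts p ∧ ∀ t ∈ ts, t ∈ UA A ∧ ¬ NondetIn (UA A) t := by
  induction h using Relation.ReflTransGen.head_induction_on with
  | refl => exact ⟨[], [], IsRun.nil _, by simp⟩
  | head hstep _ ih =>
    obtain ⟨a, haU, hand⟩ := hstep
    obtain ⟨w, ts, hrun, hts⟩ := ih
    refine ⟨a :: w, _ :: ts, IsRun.cons (UA_subset haU) hrun, ?_⟩
    intro t ht
    rcases List.mem_cons.mp ht with h | h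
    · subst h; exact ⟨haU, hand⟩
    · exact hts t h

theorem nondetCount_eq_zero {S : Finset (Q × σ × Q)} {ts : List (Q × σ × Q)}
    (h : ∀ t ∈ ts, ¬ NondetIn S t) : nondetCount S ts = 0 := by
  induction ts with
  | nil => rfl
  | cons t ts ih =>
    rw [nondetCount_cons, if_neg (h t (by simp)), ih fun u hu => h u (by simp [hu])]

theorem coacc_of_memUA {A : NFA' σ Q} {t : Q × σ × Q} (h : t ∈ UA A) :
    Coacc A t.2.2 := by
  obtain ⟨_, w, ts, ⟨r, hr, hrun⟩, ht⟩ := mem_UA.mp h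
  obtain ⟨w', ts', hrun', _⟩ := isRun_split hrun ht
  exact ⟨w', ts', r, hr, hrun'⟩

theorem cobound_of_rel {A : NFA' σ Q} {B : ℕ}
    (hPB : ∀ w ts, A.AccRun w ts → nondetCount (UA A) ts ≤ B)
    {q : Q} (h : Rel A q) : Cobound A q B := by
  obtain ⟨w0, ts0, hrun0⟩ := h
  intro w ts r hr hrun
  have := hPB (w0 ++ w) (ts0 ++ ts) ⟨r, hr, isRun_append hrun0 hrun⟩
  rw [nondetCount_append] at this
  omega

theorem mem_UA_of_rel_run {A : NFA' σ Q} {q r : Q} {w : List σ}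
    {ts : List (Q × σ × Q)} (hq : Rel A q) (hrun : IsRun A.trans q w ts r)
    (hr : r ∈ A.accept) {t : Q × σ × Q} (ht : t ∈ ts) : t ∈ UA A := by
  obtain ⟨w0, ts0, hrun0⟩ := hq
  exact mem_UA_of_accRun ⟨r, hr, isRun_append hrun0 hrun⟩ (by simp [ht])

/-- bound propagation to the targets of a group of an available nondeterministic
transition -/
theorem cobound_group {A : NFA' σ Q} {q : Q} {k : ℕ} (hb : Cobound A q (k+1))
    {t t' : Q × σ × Q} (ht : t ∈ NextS (UA A) q) (ht' : t' ∈ groupS (UA A) t) :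
    Cobound A t'.2.2 k := by
  obtain ⟨htU, hnd, hdr⟩ := mem_NextS.mp ht
  obtain ⟨ht'U, h1, h2⟩ := mem_groupS.mp ht'
  obtain ⟨wπ, π, hπrun, hπ⟩ := detReach_run hdr
  intro w ts r hr hrun
  have ht'nd : NondetIn (UA A) t' := nondetIn_of_groupS hnd ht'
  have ht'mem : (t'.1, t'.2.1, t'.2.2) ∈ A.trans := by
    have := UA_subset ht'U; rwa [show (t'.1, t'.2.1, t'.2.2) = t' by rfl]
  have hrun' : IsRun A.trans t'.1 (t'.2.1 :: w) (t' :: ts) r := by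
    have := IsRun.cons ht'mem hrun
    rwa [show (t'.1, t'.2.1, t'.2.2) = t' by rfl] at this
  have hfull : IsRun A.trans q (wπ ++ t'.2.1 :: w) (π ++ t' :: ts) r := by
    apply isRun_append _ hrun'
    rw [h1]; exact hπrun
  have := hb _ _ _ hr hfull
  rw [nondetCount_append, nondetCount_cons, if_pos ht'nd,
    nondetCount_eq_zero (fun u hu => (hπ u hu).2)] at this
  omega

theorem one_le_of_nextS {A : NFA' σ Q} {q : Q} {k : ℕ} (hb : Cobound A q k)
    {t : Q × σ × Q} (ht : t ∈ NextS (UA A) q) : 1 ≤ k := by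
  obtain ⟨htU, hnd, hdr⟩ := mem_NextS.mp ht
  obtain ⟨wπ, π, hπrun, hπ⟩ := detReach_run hdr
  obtain ⟨w', ts', r, hr, hrun'⟩ := coacc_of_memUA htU
  have htmem : (t.1, t.2.1, t.2.2) ∈ A.trans := by
    have := UA_subset htU; rwa [show (t.1, t.2.1, t.2.2) = t by rfl]
  have hrun'' : IsRun A.trans t.1 (t.2.1 :: w') (t :: ts') r := by
    have := IsRun.cons htmem hrun'
    rwa [show (t.1, t.2.1, t.2.2) = t by rfl] at this
  have hfull : IsRun A.trans q (wπ ++ t.2.1 :: w') (π ++ t :: ts') r :=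
    isRun_append hπrun hrun''
  have := hb _ _ _ hr hfull
  rw [nondetCount_append, nondetCount_cons, if_pos hnd] at this
  omega

/-- stabilization of `Nf` at states whose accepting runs have bounded
nondeterminism -/
theorem Nf_stab {A : NFA' σ Q} :
    ∀ k q, Cobound A q k → ∀ j, k ≤ j → Nf (UA A) j q = Nf (UA A) k q := by
  intro k
  induction k using Nat.strong_induction_on with
  | _ k ih =>
    intro q hb j hj
    by_cases hne : (NextS (UA A) q).Nonempty
    · obtain ⟨t0, ht0⟩ := hne
      have hk1 : 1 ≤ k := one_le_of_nextS hb ht0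
      obtain ⟨k', rfl⟩ : ∃ k', k = k' + 1 := ⟨k - 1, by omega⟩
      obtain ⟨j', rfl⟩ : ∃ j', j = j' + 1 := ⟨j - 1, by omega⟩
      rw [Nf_succ, Nf_succ, if_pos ⟨t0, ht0⟩, if_pos ⟨t0, ht0⟩]
      apply Finset.sup_congr rfl
      intro t ht
      apply Finset.sum_congr rfl
      intro t' ht'
      exact ih k' (by omega) t'.2.2 (cobound_group hb ht ht') j' (by omega)
    · rw [Nf_of_empty hne, Nf_of_empty hne]

end Stmt10Aux
namespace Stmt10Aux

open NFA'

variable {σ Q : Type}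

theorem upper_bound {A : NFA' σ Q} (R : A.Resolver) :
    ∀ k q, Coacc A q → Cobound A q k →
      ∃ w ts r, r ∈ A.accept ∧ IsRun A.trans q w ts r ∧
        runProb R.r ts ≤ 1 / (Nf (UA A) k q : ℝ) := by
  intro k
  induction k with
  | zero =>
    intro q hco _
    obtain ⟨w, ts, r, hr, hrun⟩ := hco
    refine ⟨w, ts, r, hr, hrun, ?_⟩
    have : runProb R.r ts ≤ 1 :=
      runProb_le_one fun t _ => ⟨R.nonneg t, R.le_one t⟩
    simpa [Nf] using this
  | succ k ih =>
    intro q hco hb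
    by_cases hne : (NextS (UA A) q).Nonempty
    · -- the adversary's best group
      obtain ⟨tstar, htstar, hsup⟩ :=
        Finset.exists_mem_eq_sup _ hne (Mf (UA A) k)
      obtain ⟨htU, hnd, hdr⟩ := mem_NextS.mp htstar
      set M : ℕ := Mf (UA A) k tstar with hM
      have hM1 : 1 ≤ M := le_trans (one_le_Nf _ k tstar.2.2) (le_Mf (self_mem_groupS htU))
      have hMpos : (0:ℝ) < (M:ℝ) := by exact_mod_cast Nat.lt_of_lt_of_le Nat.zero_lt_one hM1
      have hgsub : groupS (UA A) tstar ⊆ A.trans := fun u hu =>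
        UA_subset (mem_groupS.mp hu).1
      -- find a cheap transition in the group
      have hpa : ∃ u, (tstar.1, tstar.2.1, u) ∈ A.trans := by
        refine ⟨tstar.2.2, ?_⟩
        have := UA_subset htU
        rwa [show (tstar.1, tstar.2.1, tstar.2.2) = tstar by rfl]
      have hsum := resolver_sum_le R hpa hgsub (fun u hu => (mem_groupS.mp hu).2)
      have hex : ∃ t' ∈ groupS (UA A) tstar,
          R.r t' ≤ (Nf (UA A) k t'.2.2 : ℝ) / (M:ℝ) := by
        by_contra hcon
        push_neg at hcon
        have hlt : ∑ t' ∈ groupS (UA A) tstar, (Nf (UA A) k t'.2.2 : ℝ) / (M:ℝ)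
            < ∑ t' ∈ groupS (UA A) tstar, R.r t' :=
          Finset.sum_lt_sum_of_nonempty ⟨tstar, self_mem_groupS htU⟩ hcon
        have heq : ∑ t' ∈ groupS (UA A) tstar, (Nf (UA A) k t'.2.2 : ℝ) / (M:ℝ) = 1 := by
          rw [← Finset.sum_div]
          rw [div_eq_one_iff_eq (ne_of_gt hMpos)]
          rw [hM]
          unfold Mf
          push_cast
          rfl
        rw [heq] at hlt
        exact absurd hsum (not_le.mpr hlt)
      obtain ⟨t', ht', hcheap⟩ := hex
      have ht'U : t' ∈ UA A := (mem_groupS.mp ht').1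
      have h1 : t'.1 = tstar.1 := (mem_groupS.mp ht').2.1
      -- induction hypothesis at the target of t'
      obtain ⟨w', ts', r, hr, hrun', hprob⟩ :=
        ih t'.2.2 (coacc_of_memUA ht'U) (cobound_group hb htstar ht')
      -- the deterministic path to the branching state
      obtain ⟨wπ, π, hπrun, hπ⟩ := detReach_run hdr
      have ht'mem : (t'.1, t'.2.1, t'.2.2) ∈ A.trans := by
        have := UA_subset ht'U
        rwa [show (t'.1, t'.2.1, t'.2.2) = t' by rfl]
      have hrun'' : IsRun A.trans t'.1 (t'.2.1 :: w') (t' :: ts') r := by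
        have := IsRun.cons ht'mem hrun'
        rwa [show (t'.1, t'.2.1, t'.2.2) = t' by rfl] at this
      have hfull : IsRun A.trans q (wπ ++ t'.2.1 :: w') (π ++ t' :: ts') r := by
        apply isRun_append _ hrun''
        rw [h1]; exact hπrun
      refine ⟨_, _, r, hr, hfull, ?_⟩
      -- probability estimate
      have hNn : (0:ℝ) < (Nf (UA A) k t'.2.2 : ℝ) := by
        exact_mod_cast Nat.lt_of_lt_of_le Nat.zero_lt_one (one_le_Nf _ k t'.2.2)
      have hπle : runProb R.r π ≤ 1 :=
        runProb_le_one fun u _ => ⟨R.nonneg u, R.le_one u⟩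
      have hπnn : 0 ≤ runProb R.r π := runProb_nonneg fun u _ => R.nonneg u
      have hts'nn : 0 ≤ runProb R.r ts' := runProb_nonneg fun u _ => R.nonneg u
      have key : runProb R.r (π ++ t' :: ts')
          ≤ 1 * ((Nf (UA A) k t'.2.2 : ℝ) / (M:ℝ)) * (1 / (Nf (UA A) k t'.2.2 : ℝ)) := by
        rw [runProb_append, runProb_cons, ← mul_assoc]
        apply mul_le_mul _ hprob hts'nn (by positivity)
        exact mul_le_mul hπle hcheap (R.nonneg t') zero_le_one
      have keq : 1 * ((Nf (UA A) k t'.2.2 : ℝ) / (M:ℝ)) * (1 / (Nf (UA A) k t'.2.2 : ℝ))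
          = 1 / (M:ℝ) := by
        field_simp
      rw [keq] at key
      have hNfq : Nf (UA A) (k+1) q = M := by
        rw [Nf_succ, if_pos hne, ← hsup]
      rw [hNfq]
      exact key
    · obtain ⟨w, ts, r, hr, hrun⟩ := hco
      refine ⟨w, ts, r, hr, hrun, ?_⟩
      have : runProb R.r ts ≤ 1 :=
        runProb_le_one fun t _ => ⟨R.nonneg t, R.le_one t⟩
      rw [Nf_succ, if_neg hne]
      simpa using this

end Stmt10Aux
namespace Stmt10Aux

open NFA'

variable {σ Q : Type}

open scoped Classical

noncomputable def pick (A : NFA' σ Q) (p : Q) (a : σ) : Q :=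
  if h : ∃ u, (p, a, u) ∈ A.trans then h.choose else A.init

theorem pick_mem {A : NFA' σ Q} {p : Q} {a : σ} (h : ∃ u, (p, a, u) ∈ A.trans) :
    (p, a, pick A p a) ∈ A.trans := by
  rw [pick, dif_pos h]
  exact h.choose_spec

open scoped Classical in
noncomputable def xdef (A : NFA' σ Q) (B : ℕ) : Q × σ × Q → ℝ := fun t =>
  if t ∈ UA A then
    (if NondetIn (UA A) t then (Nf (UA A) B t.2.2 : ℝ) / (Mf (UA A) B t : ℝ) else 1)
  else if t ∈ A.trans ∧ (¬ ∃ u, (t.1, t.2.1, u) ∈ UA A) ∧ t.2.2 = pick A t.1 t.2.1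
    then 1 else 0

theorem one_le_Mf {A : NFA' σ Q} {B : ℕ} {t : Q × σ × Q} (h : t ∈ UA A) :
    1 ≤ Mf (UA A) B t :=
  le_trans (one_le_Nf _ B t.2.2) (le_Mf (self_mem_groupS h))

theorem Mf_pos {A : NFA' σ Q} {B : ℕ} {t : Q × σ × Q} (h : t ∈ UA A) :
    (0:ℝ) < (Mf (UA A) B t : ℝ) := by
  exact_mod_cast Nat.lt_of_lt_of_le Nat.zero_lt_one (one_le_Mf h)

theorem xdef_of_nondet {A : NFA' σ Q} {B : ℕ} {t : Q × σ × Q} (htU : t ∈ UA A)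
    (hnd : NondetIn (UA A) t) :
    xdef A B t = (Nf (UA A) B t.2.2 : ℝ) / (Mf (UA A) B t : ℝ) := by
  rw [xdef]
  classical
  rw [if_pos htU, if_pos hnd]

theorem xdef_of_det {A : NFA' σ Q} {B : ℕ} {t : Q × σ × Q} (htU : t ∈ UA A)
    (hnd : ¬ NondetIn (UA A) t) : xdef A B t = 1 := by
  rw [xdef]
  classical
  rw [if_pos htU, if_neg hnd]

theorem xdef_nonneg (A : NFA' σ Q) (B : ℕ) (t : Q × σ × Q) : 0 ≤ xdef A B t := by
  rw [xdef]
  classical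
  split_ifs with h1 h2 h3
  · positivity
  · norm_num
  · norm_num
  · norm_num

theorem xdef_le_one (A : NFA' σ Q) (B : ℕ) (t : Q × σ × Q) : xdef A B t ≤ 1 := by
  rw [xdef]
  classical
  split_ifs with h1 h2 h3
  · rw [div_le_one (Mf_pos h1)]
    exact_mod_cast le_Mf (self_mem_groupS h1)
  · norm_num
  · norm_num
  · norm_num

theorem xdef_supp (A : NFA' σ Q) (B : ℕ) (t : Q × σ × Q) (h : xdef A B t ≠ 0) :
    t ∈ A.trans := by
  rw [xdef] at h
  classical
  split_ifs at h with h1 h2 h3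
  · exact UA_subset h1
  · exact UA_subset h1
  · exact h3.1
  · exact absurd rfl h

theorem indicator_slice_sum (s : Finset (Q × σ × Q)) (f : Q × σ × Q → ℝ) (p : Q) (a : σ) :
    ∑ t ∈ s, {t : Q × σ × Q | t.1 = p ∧ t.2.1 = a}.indicator f t
      = ∑ t ∈ s.filter (fun t => t.1 = p ∧ t.2.1 = a), f t := by
  classical
  rw [Finset.sum_filter]
  apply Finset.sum_congr rfl
  intro t _
  by_cases h : t.1 = p ∧ t.2.1 = a <;> simp [Set.indicator_apply, h]

theorem xdef_sum_one (A : NFA' σ Q) (B : ℕ) (p : Q) (a : σ)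
    (hpa : ∃ u, (p, a, u) ∈ A.trans) :
    ∑ t ∈ A.trans, {t : Q × σ × Q | t.1 = p ∧ t.2.1 = a}.indicator (xdef A B) t = 1 := by
  classical
  rw [indicator_slice_sum]
  by_cases hU : ∃ u, (p, a, u) ∈ UA A
  · obtain ⟨u0, hu0⟩ := hU
    set t0 : Q × σ × Q := (p, a, u0) with ht0
    -- the slice restricted to U is the group of t0
    have hgrp : groupS (UA A) t0 = (UA A).filter (fun t => t.1 = p ∧ t.2.1 = a) := rfl
    have hsub : groupS (UA A) t0 ⊆ A.trans.filter (fun t => t.1 = p ∧ t.2.1 = a) := by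
      intro t ht
      obtain ⟨h1, h2, h3⟩ := mem_groupS.mp ht
      exact Finset.mem_filter.mpr ⟨UA_subset h1, h2, h3⟩
    have hzero : ∀ t ∈ A.trans.filter (fun t => t.1 = p ∧ t.2.1 = a),
        t ∉ groupS (UA A) t0 → xdef A B t = 0 := by
      intro t ht htn
      obtain ⟨htr, hp, ha⟩ := Finset.mem_filter.mp ht
      have htnU : t ∉ UA A := by
        intro hc
        exact htn (mem_groupS.mpr ⟨hc, hp, ha⟩)
      rw [xdef, if_neg htnU, if_neg]
      rintro ⟨-, hno, -⟩
      rw [hp, ha] at hno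
      exact hno ⟨u0, hu0⟩
    rw [← Finset.sum_subset hsub hzero]
    by_cases hnd : NondetIn (UA A) t0
    · have : ∀ t ∈ groupS (UA A) t0,
          xdef A B t = (Nf (UA A) B t.2.2 : ℝ) / (Mf (UA A) B t0 : ℝ) := by
        intro t ht
        rw [xdef_of_nondet (mem_groupS.mp ht).1 (nondetIn_of_groupS hnd ht)]
        congr 2
        unfold Mf
        rw [groupS_congr ht]
      rw [Finset.sum_congr rfl this, ← Finset.sum_div]
      rw [div_eq_one_iff_eq (ne_of_gt (Mf_pos hu0))]
      unfold Mf
      push_cast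
      rfl
    · have hsingle : groupS (UA A) t0 = {t0} := by
        ext t
        rw [mem_groupS]
        constructor
        · rintro ⟨h1, h2, h3⟩
          have : t.2.2 = t0.2.2 := by
            by_contra hne
            exact hnd ⟨hu0, t.2.2, hne, by rw [← h2, ← h3]; exact h1⟩
          simp only [Finset.mem_singleton]
          have : (t.1, t.2.1, t.2.2) = (t0.1, t0.2.1, t0.2.2) := by rw [h2, h3, this]
          simpa using this
        · intro h
          rw [Finset.mem_singleton] at h
          subst h
          exact ⟨hu0, rfl, rfl⟩
      rw [hsingle, Finset.sum_singleton, xdef_of_det hu0 hnd]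
  · have : ∀ t ∈ A.trans.filter (fun t => t.1 = p ∧ t.2.1 = a),
        xdef A B t = if t = (p, a, pick A p a) then 1 else 0 := by
      intro t ht
      obtain ⟨htr, hp, ha⟩ := Finset.mem_filter.mp ht
      have htnU : t ∉ UA A := by
        intro hc
        refine hU ⟨t.2.2, ?_⟩
        rw [← hp, ← ha]
        rwa [show (t.1, t.2.1, t.2.2) = t from rfl]
      rw [xdef, if_neg htnU]
      by_cases he : t.2.2 = pick A t.1 t.2.1
      · rw [if_pos ⟨htr, by rw [hp, ha]; exact hU, he⟩, if_pos]
        rw [← hp, ← ha]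
        rw [← he]
      · rw [if_neg, if_neg]
        · intro hc
          rw [hc] at he
          simp [hp, ha] at he
        · rintro ⟨-, -, hc⟩
          exact he hc
    rw [Finset.sum_congr rfl this]
    rw [Finset.sum_ite_eq' (A.trans.filter (fun t => t.1 = p ∧ t.2.1 = a)) ((p, a, pick A p a)) (fun _ => (1:ℝ))]
    rw [if_pos]
    exact Finset.mem_filter.mpr ⟨pick_mem hpa, rfl, rfl⟩

noncomputable def xres (A : NFA' σ Q) (B : ℕ) : A.Resolver where
  r := xdef A B
  nonneg := xdef_nonneg A B
  le_one := xdef_le_one A B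
  supp := xdef_supp A B
  sum_one := fun p a hpa => xdef_sum_one A B p a hpa

end Stmt10Aux
namespace Stmt10Aux

open NFA'

variable {σ Q : Type}

theorem Nf_cast_pos {A : NFA' σ Q} (B : ℕ) (q : Q) :
    (0:ℝ) < (Nf (UA A) B q : ℝ) := by
  exact_mod_cast Nat.lt_of_lt_of_le Nat.zero_lt_one (one_le_Nf _ B q)

theorem lower_bound {A : NFA' σ Q} {B : ℕ}
    (hPB : ∀ w ts, A.AccRun w ts → nondetCount (UA A) ts ≤ B) :
    ∀ (ts : List (Q × σ × Q)) (q : Q) (w : List σ) (r : Q), r ∈ A.accept →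
      IsRun A.trans q w ts r → Rel A q →
      1 / (Nf (UA A) B q : ℝ) ≤ runProb (xdef A B) ts := by
  intro ts q w r hr hrun
  induction hrun with
  | nil q =>
    intro _
    rw [runProb_nil]
    rw [div_le_one (Nf_cast_pos B q)]
    exact_mod_cast one_le_Nf _ B q
  | @cons p a q' r' w' ts' hmem htail ih =>
    intro hrel
    have hrel' : Rel A q' := rel_step hrel hmem
    have ihv := ih hr hrel'
    have htU : (p, a, q') ∈ UA A :=
      mem_UA_of_rel_run hrel (IsRun.cons hmem htail) hr (by simp)
    rw [runProb_cons]
    have hts'nn : 0 ≤ runProb (xdef A B) ts' :=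
      runProb_nonneg fun u _ => xdef_nonneg A B u
    by_cases hnd : NondetIn (UA A) (p, a, q')
    · rw [xdef_of_nondet htU hnd]
      -- `Mf B t ≤ Nf B p`
      have htnext : (p, a, q') ∈ NextS (UA A) p :=
        mem_NextS.mpr ⟨htU, hnd, Relation.ReflTransGen.refl⟩
      have hbq : Cobound A p B := cobound_of_rel hPB hrel
      have hB1 : 1 ≤ B := one_le_of_nextS hbq htnext
      obtain ⟨B', rfl⟩ : ∃ B', B = B' + 1 := ⟨B - 1, by omega⟩
      have hMle : Mf (UA A) (B'+1) (p, a, q') ≤ Nf (UA A) (B'+1) p := by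
        have h1 : Mf (UA A) (B'+1) (p, a, q') = Mf (UA A) B' (p, a, q') := by
          unfold Mf
          apply Finset.sum_congr rfl
          intro t' ht'
          exact Nf_stab B' t'.2.2 (cobound_group hbq htnext ht') (B'+1) (by omega)
        rw [h1, Nf_succ, if_pos ⟨_, htnext⟩]
        exact Finset.le_sup htnext
      have hMpos : (0:ℝ) < (Mf (UA A) (B'+1) (p, a, q') : ℝ) := Mf_pos htU
      have hNq' : (0:ℝ) < (Nf (UA A) (B'+1) q' : ℝ) := Nf_cast_pos _ q'
      have step1 : 1 / (Nf (UA A) (B'+1) p : ℝ)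
          ≤ 1 / (Mf (UA A) (B'+1) (p, a, q') : ℝ) := by
        apply one_div_le_one_div_of_le hMpos
        exact_mod_cast hMle
      have step2 : 1 / (Mf (UA A) (B'+1) (p, a, q') : ℝ)
          ≤ ((Nf (UA A) (B'+1) q' : ℝ) / (Mf (UA A) (B'+1) (p, a, q') : ℝ))
            * runProb (xdef A (B'+1)) ts' := by
        have h2 : ((Nf (UA A) (B'+1) q' : ℝ) / (Mf (UA A) (B'+1) (p, a, q') : ℝ))
            * (1 / (Nf (UA A) (B'+1) q' : ℝ))
            = 1 / (Mf (UA A) (B'+1) (p, a, q') : ℝ) := by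
          field_simp
        rw [← h2]
        exact mul_le_mul_of_nonneg_left ihv (by positivity)
      exact le_trans step1 step2
    · rw [xdef_of_det htU hnd, one_mul]
      have hdr : DetReach (UA A) p q' := Relation.ReflTransGen.single ⟨a, htU, hnd⟩
      have hle : Nf (UA A) B q' ≤ Nf (UA A) B p := Nf_le_of_detReach hdr B
      refine le_trans ?_ ihv
      apply one_div_le_one_div_of_le (Nf_cast_pos B q')
      exact_mod_cast hle

end Stmt10Aux
open Stmt10Aux

/-- For a trim unambiguous NFA that is positively resolvable there is a positive
integer `N` such that, for `λ ∈ (0,1]`, `A` is `λ`-resolvable iff `λ ≤ 1/N`;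
in particular `A` is `1/N`-resolvable but not `(1/N + ε)`-resolvable for any `ε > 0`. -/
theorem stmt10 {σ Q : Type} (A : NFA' σ Q)
    (hunamb : A.kAmbiguous 1)
    (htrim : ∀ q : Q, (∃ x, q ∈ A.reach A.init x) ∧ ∃ z, A.AccFrom q z)
    (hpos : A.PositivelyResolvable) :
    ∃ N : ℕ, 0 < N ∧
      (∀ lam : ℝ, 0 < lam → lam ≤ 1 → (A.Resolvable lam ↔ lam ≤ 1 / N)) ∧
      A.Resolvable (1 / N) ∧
      (∀ ε : ℝ, 0 < ε → ¬ A.Resolvable (1 / N + ε)) := by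
  classical
  obtain ⟨lam0, hlam0, R0, hR0⟩ := hpos
  -- the language is nonempty
  obtain ⟨z, rz, hrz, tsz, hrunz⟩ := (htrim A.init).2
  have hzacc : A.AccRun z tsz := ⟨rz, hrz, hrunz⟩
  have hzlang : z ∈ A.lang := ⟨tsz, hzacc⟩
  -- basic facts about the witnessing resolver
  have hmem : ∀ w ∈ A.lang, lam0 ≤ A.accProb R0.r w := by
    intro w hw
    rw [← hR0] at hw
    exact hw
  have hrunlb : ∀ w ts, A.AccRun w ts → lam0 ≤ runProb R0.r ts := by
    intro w ts h
    have := hmem w ⟨ts, h⟩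
    rwa [accProb_eq_runProb hunamb R0.r h] at this
  have hlam01 : lam0 ≤ 1 := by
    have h1 := hrunlb z tsz hzacc
    have h2 : runProb R0.r tsz ≤ 1 :=
      runProb_le_one fun t _ => ⟨R0.nonneg t, R0.le_one t⟩
    linarith
  have hUlb : ∀ t ∈ UA A, lam0 ≤ R0.r t := by
    intro t ht
    obtain ⟨-, w, ts, hacc, hts⟩ := mem_UA.mp ht
    exact le_trans (hrunlb w ts hacc)
      (runProb_le_factor (fun u _ => ⟨R0.nonneg u, R0.le_one u⟩) hts)
  have hUub : ∀ t, NondetIn (UA A) t → R0.r t ≤ 1 - lam0 := by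
    intro t ht
    obtain ⟨htU, q', hq', hq'U⟩ := ht
    have htne : t ≠ (t.1, t.2.1, q') := by
      intro hc
      exact hq' (by rw [hc])
    have hpair : R0.r t + R0.r (t.1, t.2.1, q') ≤ 1 := by
      have := resolver_sum_le R0 (p := t.1) (a := t.2.1)
        ⟨t.2.2, by rw [show (t.1, t.2.1, t.2.2) = t from rfl]; exact UA_subset htU⟩
        (g := {t, (t.1, t.2.1, q')})
        (by
          intro u hu
          rcases Finset.mem_insert.mp hu with h | h
          · subst h; exact UA_subset htU
          · rw [Finset.mem_singleton] at h; subst h; exact UA_subset hq'U)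
        (by
          intro u hu
          rcases Finset.mem_insert.mp hu with h | h
          · subst h; exact ⟨rfl, rfl⟩
          · rw [Finset.mem_singleton] at h; subst h; exact ⟨rfl, rfl⟩)
      rwa [Finset.sum_pair htne] at this
    have := hUlb _ hq'U
    linarith
  -- a uniform bound on the nondeterminism of accepting runs
  obtain ⟨B, hB⟩ : ∃ n, (1 - lam0) ^ n < lam0 :=
    exists_pow_lt_of_lt_one hlam0 (by linarith)
  have hPB : ∀ w ts, A.AccRun w ts → nondetCount (UA A) ts ≤ B := by
    intro w ts h
    by_contra hc
    push_neg at hc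
    have h1 : runProb R0.r ts ≤ (1 - lam0) ^ nondetCount (UA A) ts := by
      apply runProb_le_pow (by linarith) (by linarith)
        (fun t _ => ⟨R0.nonneg t, R0.le_one t⟩)
      intro t ht hnd
      exact hUub t hnd
    have h2 : (1 - lam0) ^ nondetCount (UA A) ts ≤ (1 - lam0) ^ B :=
      pow_le_pow_of_le_one (by linarith) (by linarith) (le_of_lt hc)
    have h3 := hrunlb w ts h
    linarith
  -- the optimal value
  set N : ℕ := Nf (UA A) B A.init with hN
  have hN1 : 1 ≤ N := one_le_Nf _ B A.init
  have hNpos : (0:ℝ) < (N:ℝ) := by exact_mod_cast Nat.lt_of_lt_of_le Nat.zero_lt_one hN1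
  have hNinv : (0:ℝ) < 1 / (N:ℝ) := by positivity
  -- resolvability below the value
  have hres : ∀ lam : ℝ, 0 < lam → lam ≤ 1 / (N:ℝ) → A.Resolvable lam := by
    intro lam hpos hle
    refine ⟨xres A B, ?_⟩
    ext w
    simp only [Set.mem_setOf_eq]
    constructor
    · intro h
      by_contra hw
      rw [show (xres A B).r = xdef A B from rfl, accProb_of_not_lang _ hw] at h
      linarith
    · intro hw
      obtain ⟨ts, hacc⟩ := hw
      obtain ⟨r, hr, hrun⟩ := hacc
      rw [show (xres A B).r = xdef A B from rfl,
        accProb_eq_runProb hunamb _ ⟨r, hr, hrun⟩]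
      exact le_trans hle (lower_bound hPB ts A.init w r hr hrun (rel_init A))
  -- no resolvability above the value
  have hub : ∀ lam : ℝ, 0 < lam → A.Resolvable lam → lam ≤ 1 / (N:ℝ) := by
    intro lam hpos ⟨R, hR⟩
    have hco : Coacc A A.init := ⟨z, tsz, rz, hrz, hrunz⟩
    have hcb : Cobound A A.init B := cobound_of_rel hPB (rel_init A)
    obtain ⟨w, ts, r, hr, hrun, hle⟩ := upper_bound R B A.init hco hcb
    have hwlang : w ∈ A.lang := ⟨ts, r, hr, hrun⟩
    have h1 : lam ≤ A.accProb R.r w := by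
      rw [← hR] at hwlang
      exact hwlang
    rw [accProb_eq_runProb hunamb _ ⟨r, hr, hrun⟩] at h1
    exact le_trans h1 hle
  refine ⟨N, by omega, ?_, ?_, ?_⟩
  · intro lam hpos hle1
    constructor
    · exact hub lam hpos
    · intro h
      exact hres lam hpos h
  · exact hres _ hNinv (le_refl _)
  · intro ε hε hcon
    have := hub _ (by linarith) hcon
    linarith
end

section
/- Let A be an unambiguous NFA over Σ with initial state q0, let $ ∉ Σ, and let B be the NFA over Σ ∪ {$} obtained from A by adding a new initial state t together with the two transitions (t, $, t) and (t, $, q0), keeping all transitions and accepting states of A. Then B is unambiguous, and the following are equivalent: (i) L(A) = ∅; (ii) B is positively resolvable; (iii) for any fixed λ ∈ (0,1], B is λ-resolvable. -/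
open scoped BigOperators

open NFA'

/-- The NFA `B` obtained from `A` by adding a new initial state `t` (= `none`),
a fresh letter `$` (= `none`), and the transitions `(t,$,t)` and `(t,$,q0)`. -/
def extendNFA {σ Q : Type} [DecidableEq σ] [DecidableEq Q] (A : NFA' σ Q) :
    NFA' (Option σ) (Option Q) where
  init := none
  trans :=
    (A.trans.image (fun t => (some t.1, some t.2.1, some t.2.2))) ∪
      {(none, none, none), (none, none, some A.init)}
  accept := A.accept.image some


namespace Stmt11Aux

variable {σ Q : Type} [DecidableEq σ] [DecidableEq Q]

/-- Lift a transition of `A` to a transition of `extendNFA A`. -/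
def liftT : Q × σ × Q → Option Q × Option σ × Option Q :=
  fun t => (some t.1, some t.2.1, some t.2.2)

lemma liftT_injective : Function.Injective (liftT (σ := σ) (Q := Q)) := by
  rintro ⟨a, b, c⟩ ⟨d, e, f⟩ h
  simp [liftT, Prod.ext_iff] at h
  simp [Prod.ext_iff, h.1, h.2.1, h.2.2]

lemma liftT_mem {A : NFA' σ Q} {t : Q × σ × Q} (h : t ∈ A.trans) :
    liftT t ∈ (extendNFA A).trans :=
  Finset.mem_union_left _ (Finset.mem_image_of_mem _ h)

lemma loop_mem (A : NFA' σ Q) :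
    ((none, none, none) : Option Q × Option σ × Option Q) ∈ (extendNFA A).trans := by
  simp [extendNFA]

lemma jump_mem (A : NFA' σ Q) :
    ((none, none, some A.init) : Option Q × Option σ × Option Q) ∈ (extendNFA A).trans := by
  simp [extendNFA]

lemma trans_cases {A : NFA' σ Q} {x : Option Q × Option σ × Option Q}
    (h : x ∈ (extendNFA A).trans) :
    (∃ t ∈ A.trans, x = liftT t) ∨ x = (none, none, none) ∨ x = (none, none, some A.init) := by
  rcases Finset.mem_union.1 h with h' | h'
  · obtain ⟨t, ht, rfl⟩ := Finset.mem_image.1 h'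
    exact Or.inl ⟨t, ht, rfl⟩
  · rcases Finset.mem_insert.1 h' with h' | h'
    · exact Or.inr (Or.inl h')
    · exact Or.inr (Or.inr (Finset.mem_singleton.1 h'))

lemma run_lift {A : NFA' σ Q} {q : Q} {u : List σ} {ts : List (Q × σ × Q)} {f : Q}
    (h : IsRun A.trans q u ts f) :
    IsRun (extendNFA A).trans (some q) (u.map some) (ts.map liftT) (some f) := by
  induction h with
  | nil q => exact IsRun.nil (some q)
  | cons hmem _ ih => exact IsRun.cons (liftT_mem hmem) ih

lemma run_some {A : NFA' σ Q} {s : Option Q} {w : List (Option σ)}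
    {ts : List (Option Q × Option σ × Option Q)} {r : Option Q}
    (h : IsRun (extendNFA A).trans s w ts r) :
    ∀ q : Q, s = some q →
      ∃ (u : List σ) (ts' : List (Q × σ × Q)) (f : Q),
        w = u.map some ∧ ts = ts'.map liftT ∧ r = some f ∧ IsRun A.trans q u ts' f := by
  induction h with
  | nil q0 =>
    rintro q rfl
    exact ⟨[], [], q, rfl, rfl, rfl, IsRun.nil q⟩
  | @cons p a q0 r w ts hmem hrun ih =>
    rintro q rfl
    rcases trans_cases hmem with ⟨t, htm, ht⟩ | ht | ht
    · obtain ⟨t1, t2, t3⟩ := t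
      simp only [liftT, Prod.mk.injEq, Option.some.injEq] at ht
      obtain ⟨rfl, rfl, rfl⟩ := ht
      obtain ⟨u, ts', f, rfl, rfl, rfl, hr⟩ := ih t3 rfl
      exact ⟨t2 :: u, (q, t2, t3) :: ts', f, rfl, rfl, rfl, IsRun.cons htm hr⟩
    · simp [Prod.ext_iff] at ht
    · simp [Prod.ext_iff] at ht

lemma run_none {A : NFA' σ Q} {s : Option Q} {w : List (Option σ)}
    {ts : List (Option Q × Option σ × Option Q)} {r : Option Q}
    (h : IsRun (extendNFA A).trans s w ts r) (hs : s = none) :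
    (∃ m, w = List.replicate m none ∧ ts = List.replicate m (none, none, none) ∧ r = none) ∨
    (∃ (m : ℕ) (u : List σ) (ts' : List (Q × σ × Q)) (f : Q),
      w = List.replicate m none ++ none :: u.map some ∧
      ts = List.replicate m (none, none, none) ++
        (none, none, some A.init) :: ts'.map liftT ∧
      r = some f ∧ IsRun A.trans A.init u ts' f) := by
  induction h with
  | nil q0 => exact Or.inl ⟨0, by simp, by simp, hs⟩
  | @cons p a q0 r w ts hmem hrun ih =>
    subst hs
    rcases trans_cases hmem with ⟨t, htm, ht⟩ | ht | ht
    · obtain ⟨t1, t2, t3⟩ := t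
      simp [liftT, Prod.ext_iff] at ht
    · -- loop transition
      simp only [Prod.mk.injEq, true_and] at ht
      obtain ⟨rfl, rfl⟩ := ht
      rcases ih rfl with (⟨m, rfl, rfl, rfl⟩ | ⟨m, u, ts', f, rfl, rfl, rfl, hr⟩)
      · exact Or.inl ⟨m + 1, by simp [List.replicate_succ],
          by simp [List.replicate_succ], rfl⟩
      · exact Or.inr ⟨m + 1, u, ts', f, by simp [List.replicate_succ],
          by simp [List.replicate_succ], rfl, hr⟩
    · -- jump transition
      simp only [Prod.mk.injEq, true_and] at ht
      obtain ⟨rfl, rfl⟩ := ht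
      obtain ⟨u, ts', f, rfl, rfl, rfl, hr⟩ := run_some hrun A.init rfl
      exact Or.inr ⟨0, u, ts', f, rfl, rfl, rfl, hr⟩

lemma run_word {A : NFA' σ Q} {u : List σ} {ts : List (Q × σ × Q)} {f : Q}
    (h : IsRun A.trans A.init u ts f) (m : ℕ) :
    IsRun (extendNFA A).trans none (List.replicate m none ++ none :: u.map some)
      (List.replicate m (none, none, none) ++ (none, none, some A.init) :: ts.map liftT)
      (some f) := by
  induction m with
  | zero => exact IsRun.cons (jump_mem A) (run_lift h)
  | succ m ih =>
    simpa [List.replicate_succ] using IsRun.cons (loop_mem A) ih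

lemma none_not_mem_map_some (u : List σ) : (none : Option σ) ∉ u.map some := by
  simp

lemma word_eq : ∀ (m₁ m₂ : ℕ) (u₁ u₂ : List σ),
    List.replicate m₁ (none : Option σ) ++ none :: u₁.map some =
      List.replicate m₂ none ++ none :: u₂.map some → m₁ = m₂ ∧ u₁ = u₂ := by
  intro m₁
  induction m₁ with
  | zero =>
    intro m₂ u₁ u₂ h
    cases m₂ with
    | zero =>
      simp at h
      exact ⟨rfl, List.map_injective_iff.2 (Option.some_injective σ) h⟩
    | succ k =>
      simp [List.replicate_succ] at h
      exfalso
      have : (none : Option σ) ∈ u₁.map some := by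
        rw [h]; simp
      simpa using this
  | succ m ih =>
    intro m₂ u₁ u₂ h
    cases m₂ with
    | zero =>
      simp [List.replicate_succ] at h
      exfalso
      have : (none : Option σ) ∈ u₂.map some := by
        rw [← h]; simp
      simpa using this
    | succ k =>
      simp only [List.replicate_succ, List.cons_append, List.cons.injEq] at h
      obtain ⟨h1, h2⟩ := ih k u₁ u₂ h.2
      exact ⟨by omega, h2⟩

lemma accRun_iff {A : NFA' σ Q} {w : List (Option σ)}
    {ts : List (Option Q × Option σ × Option Q)} :
    (extendNFA A).AccRun w ts ↔
      ∃ (m : ℕ) (u : List σ) (ts' : List (Q × σ × Q)),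
        w = List.replicate m none ++ none :: u.map some ∧
        ts = List.replicate m (none, none, none) ++
          (none, none, some A.init) :: ts'.map liftT ∧
        A.AccRun u ts' := by
  constructor
  · rintro ⟨r, hr, hrun⟩
    rcases run_none hrun rfl with (⟨m, _, _, rfl⟩ | ⟨m, u, ts', f, h1, h2, rfl, hr'⟩)
    · exfalso; simpa [extendNFA] using hr
    · have hf : f ∈ A.accept := by
        simpa [extendNFA] using hr
      exact ⟨m, u, ts', h1, h2, f, hf, hr'⟩
  · rintro ⟨m, u, ts', rfl, rfl, f, hf, hr⟩
    exact ⟨some f, Finset.mem_image_of_mem some hf, run_word hr m⟩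

lemma B_unamb {A : NFA' σ Q} (hA : A.kAmbiguous 1) : (extendNFA A).kAmbiguous 1 := by
  intro w
  rw [Nat.cast_one, Set.encard_le_one_iff]
  rintro ts₁ ts₂ h₁ h₂
  rw [Set.mem_setOf_eq, accRun_iff] at h₁ h₂
  obtain ⟨m₁, u₁, ts₁', hw₁, rfl, hacc₁⟩ := h₁
  obtain ⟨m₂, u₂, ts₂', hw₂, rfl, hacc₂⟩ := h₂
  obtain ⟨hm, hu⟩ := word_eq m₁ m₂ u₁ u₂ (hw₁ ▸ hw₂)
  subst hm; subst hu
  have := hA u₁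
  rw [Nat.cast_one, Set.encard_le_one_iff] at this
  rw [this ts₁' ts₂' hacc₁ hacc₂]

lemma prod_le_one (f : Option Q × Option σ × Option Q → ℝ)
    (h0 : ∀ t, 0 ≤ f t) (h1 : ∀ t, f t ≤ 1) :
    ∀ l : List (Option Q × Option σ × Option Q),
      0 ≤ (l.map f).prod ∧ (l.map f).prod ≤ 1 := by
  intro l
  induction l with
  | nil => simp
  | cons a l ih =>
    simp only [List.map_cons, List.prod_cons]
    constructor
    · exact mul_nonneg (h0 a) ih.1
    · calc f a * (l.map f).prod ≤ 1 * 1 :=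
          mul_le_mul (h1 a) ih.2 ih.1 zero_le_one
        _ = 1 := by ring

/-- A uniform resolver exists for every NFA with decidable equalities. -/
noncomputable def uniformResolver (N : NFA' (Option σ) (Option Q)) : N.Resolver where
  r := fun t => if t ∈ N.trans then
      ((N.trans.filter (fun s => s.1 = t.1 ∧ s.2.1 = t.2.1)).card : ℝ)⁻¹ else 0
  nonneg := by
    intro t
    split <;> positivity
  le_one := by
    intro t
    split
    · rename_i h
      have hc : 1 ≤ (N.trans.filter (fun s => s.1 = t.1 ∧ s.2.1 = t.2.1)).card := by
        refine Finset.card_pos.2 ⟨t, ?_⟩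
        simp [Finset.mem_filter, h]
      rw [inv_le_one_iff₀]
      right
      exact_mod_cast hc
    · exact zero_le_one
  supp := by
    intro t h
    by_contra hmem
    simp [hmem] at h
  sum_one := by
    intro p a ⟨q, hq⟩
    classical
    have hrw : ∀ t ∈ N.trans,
        ({t : Option Q × Option σ × Option Q | t.1 = p ∧ t.2.1 = a}.indicator
          (fun t => if t ∈ N.trans then
            ((N.trans.filter (fun s => s.1 = t.1 ∧ s.2.1 = t.2.1)).card : ℝ)⁻¹ else 0) t) =
        if (t.1 = p ∧ t.2.1 = a) then
          ((N.trans.filter (fun s => s.1 = p ∧ s.2.1 = a)).card : ℝ)⁻¹ else 0 := by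
      intro t ht
      rw [Set.indicator_apply]
      by_cases hpa : t.1 = p ∧ t.2.1 = a
      · simp only [Set.mem_setOf_eq, hpa, if_true, ht, and_self, if_true, hpa.1, hpa.2]
      · simp [Set.mem_setOf_eq, hpa]
    rw [Finset.sum_congr rfl hrw, ← Finset.sum_filter, Finset.sum_const, nsmul_eq_mul]
    have hcard : 0 < (N.trans.filter (fun s => s.1 = p ∧ s.2.1 = a)).card :=
      Finset.card_pos.2 ⟨(p, a, q), by simp [Finset.mem_filter, hq]⟩
    rw [mul_inv_cancel₀]
    exact_mod_cast hcard.ne'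

lemma lang_empty_of {A : NFA' σ Q} (h : A.lang = ∅) : (extendNFA A).lang = ∅ := by
  ext w
  simp only [Set.mem_empty_iff_false, iff_false]
  rintro ⟨ts, hts⟩
  rw [accRun_iff] at hts
  obtain ⟨m, u, ts', _, _, hacc⟩ := hts
  have : u ∈ A.lang := ⟨ts', hacc⟩
  rw [h] at this
  exact this

lemma forward {A : NFA' σ Q} (h : A.lang = ∅) (lam : ℝ) (hlam : 0 < lam) :
    (extendNFA A).Resolvable lam := by
  refine ⟨uniformResolver (extendNFA A), ?_⟩
  have hBl := lang_empty_of h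
  rw [hBl]
  ext w
  simp only [Set.mem_setOf_eq, Set.mem_empty_iff_false, iff_false, not_le]
  have hset : {ts | (extendNFA A).AccRun w ts} = ∅ := by
    ext ts
    simp only [Set.mem_setOf_eq, Set.mem_empty_iff_false, iff_false]
    intro hts
    have : w ∈ (extendNFA A).lang := ⟨ts, hts⟩
    rw [hBl] at this
    exact this
  rw [accProb, hset, finsum_mem_empty]
  exact hlam

lemma pair_sum {A : NFA' σ Q} (R : (extendNFA A).Resolver) :
    R.r (none, none, none) + R.r (none, none, some A.init) = 1 := by
  have hsum := R.sum_one none none ⟨none, loop_mem A⟩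
  classical
  have hrw : ∀ t ∈ (extendNFA A).trans,
      ({t : Option Q × Option σ × Option Q | t.1 = none ∧ t.2.1 = none}.indicator R.r t) =
      if (t.1 = none ∧ t.2.1 = none) then R.r t else 0 := by
    intro t _
    rw [Set.indicator_apply]
    rfl
  rw [Finset.sum_congr rfl hrw, ← Finset.sum_filter] at hsum
  have hfilter : (extendNFA A).trans.filter
      (fun t => t.1 = (none : Option Q) ∧ t.2.1 = (none : Option σ)) =
      {(none, none, none), (none, none, some A.init)} := by
    ext x
    simp only [Finset.mem_filter, Finset.mem_insert, Finset.mem_singleton]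
    constructor
    · rintro ⟨hx, h1, h2⟩
      rcases trans_cases hx with (⟨t, _, rfl⟩ | rfl | rfl)
      · simp [liftT] at h1
      · exact Or.inl rfl
      · exact Or.inr rfl
    · rintro (rfl | rfl)
      · exact ⟨loop_mem A, rfl, rfl⟩
      · exact ⟨jump_mem A, rfl, rfl⟩
  rw [hfilter] at hsum
  rw [Finset.sum_insert (by simp)] at hsum
  simpa using hsum

lemma accProb_wm {A : NFA' σ Q} (hA : A.kAmbiguous 1) (R : (extendNFA A).Resolver)
    {u : List σ} {ts : List (Q × σ × Q)} (hacc : A.AccRun u ts) (m : ℕ) :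
    (extendNFA A).accProb R.r (List.replicate m none ++ none :: u.map some) =
      (R.r (none, none, none)) ^ m *
        (((((none, none, some A.init) :: ts.map liftT)).map R.r).prod) := by
  set w := List.replicate m none ++ none :: u.map some with hw
  set ts0 := List.replicate m ((none, none, none) : Option Q × Option σ × Option Q) ++
    (none, none, some A.init) :: ts.map liftT with hts0
  have hmem : (extendNFA A).AccRun w ts0 := accRun_iff.2 ⟨m, u, ts, rfl, rfl, hacc⟩
  have hset : {ts' | (extendNFA A).AccRun w ts'} = {ts0} := by
    have h1 := B_unamb hA w
    rw [Nat.cast_one, Set.encard_le_one_iff] at h1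
    ext x
    simp only [Set.mem_setOf_eq, Set.mem_singleton_iff]
    exact ⟨fun hx => h1 x ts0 hx hmem, fun hx => hx ▸ hmem⟩
  rw [accProb, hset, finsum_mem_singleton, runProb, hts0]
  simp [List.prod_replicate]

lemma backward {A : NFA' σ Q} (hA : A.kAmbiguous 1) (lam : ℝ) (hlam : 0 < lam)
    (hres : (extendNFA A).Resolvable lam) : A.lang = ∅ := by
  by_contra hne
  obtain ⟨u, ts, hacc⟩ : ∃ u ts, A.AccRun u ts := by
    rcases Set.eq_empty_or_nonempty A.lang with h | ⟨u, ts, h⟩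
    · exact absurd h hne
    · exact ⟨u, ts, h⟩
  obtain ⟨R, hR⟩ := hres
  set p := R.r (none, none, none) with hp
  set d := ((((none, none, some A.init) :: ts.map liftT)).map R.r).prod with hd
  have hmemlang : ∀ m, (List.replicate m none ++ none :: u.map some) ∈ (extendNFA A).lang :=
    fun m => ⟨_, accRun_iff.2 ⟨m, u, ts, rfl, rfl, hacc⟩⟩
  have hge : ∀ m, lam ≤ p ^ m * d := by
    intro m
    have := (hR ▸ hmemlang m : (List.replicate m none ++ none :: u.map some) ∈
      {w | lam ≤ (extendNFA A).accProb R.r w})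
    rw [Set.mem_setOf_eq, accProb_wm hA R hacc m] at this
    exact this
  have hd01 := prod_le_one R.r R.nonneg R.le_one ((none, none, some A.init) :: ts.map liftT)
  by_cases hdz : d = 0
  · have := hge 0
    rw [hdz] at this
    simp at this
    linarith
  · have hdpos : 0 < d := lt_of_le_of_ne hd01.1 (Ne.symm hdz)
    have hq'pos : 0 < R.r (none, none, some A.init) := by
      have : R.r (none, none, some A.init) ≠ 0 := by
        intro h0
        apply hdz
        rw [hd]
        simp [h0]
      exact lt_of_le_of_ne (R.nonneg _) (Ne.symm this)
    have hplt : p < 1 := by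
      have := pair_sum R
      have hq1 := R.nonneg (none, none, some A.init)
      linarith
    have hp0 : 0 ≤ p := R.nonneg _
    obtain ⟨n, hn⟩ := exists_pow_lt_of_lt_one hlam hplt
    have h1 := hge n
    have h2 : p ^ n * d ≤ p ^ n * 1 :=
      mul_le_mul_of_nonneg_left hd01.2 (pow_nonneg hp0 n)
    rw [mul_one] at h2
    linarith

end Stmt11Aux


/-- `B` is unambiguous, and: `L(A) = ∅` iff `B` is positively resolvable iff `B` is
`λ`-resolvable for any fixed `λ ∈ (0,1]`. -/

theorem stmt11 {σ Q : Type} [DecidableEq σ] [DecidableEq Q] (A : NFA' σ Q)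
    (hA : A.kAmbiguous 1) :
    (extendNFA A).kAmbiguous 1 ∧
    (A.lang = ∅ ↔ (extendNFA A).PositivelyResolvable) ∧
    (∀ lam : ℝ, 0 < lam → lam ≤ 1 →
      (A.lang = ∅ ↔ (extendNFA A).Resolvable lam)) := by
  refine ⟨Stmt11Aux.B_unamb hA, ⟨?_, ?_⟩, fun lam h1 h2 => ⟨?_, ?_⟩⟩
  · intro h
    exact ⟨1, one_pos, Stmt11Aux.forward h 1 one_pos⟩
  · rintro ⟨lam, hlam, hres⟩
    exact Stmt11Aux.backward hA lam hlam hres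
  · intro h
    exact Stmt11Aux.forward h lam h1
  · intro hres
    exact Stmt11Aux.backward hA lam h1 hres
end
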